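/- arXiv:1904.10101 — 6 statements merged into one kernel-verified Lean document; each statement's English description precedes it below -/
import Mathlib

section
/- Under the hypotheses that X_i' = X_i f + P_i satisfy [X_i',Y_k] = 0 and [X_i',X_j] = C_{ij}^k(X_k f + P_k), the operators X_i' satisfy [X_i', X_j'] = f · C_{ij}^k X_k' in the enveloping algebra U(g); that is, they generate a 'virtual copy' of the Levi subalgebra s. -/
/-- If `a` commutes with every `Y k`, then it commutes with every element of the
subalgebra generated by the `Y k`. -/
lemma commute_adjoin_range {A : Type} [Ring A] [Algebra ℝ A] {mm : ℕ}
    (Y : Fin mm → A) (a : A) (hY : ∀ k, Commute a (Y k)) :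
    ∀ x ∈ Algebra.adjoin ℝ (Set.range Y), Commute a x := by
  intro x hx
  induction hx using Algebra.adjoin_induction with
  | mem y hy => obtain ⟨k, rfl⟩ := hy; exact hY k
  | algebraMap r => exact (Algebra.commutes r a).symm
  | add x y _ _ hx hy => exact hx.add_right hy
  | mul x y _ _ hx hy => exact hx.mul_right hy

/-- In an associative algebra (such as `U(g)`), suppose the elements
`X'_i = X_i f + P_i` (with `f`, `P_i` polynomials in the radical generators `Y` only,
`f` commuting with all generators, `[P_i, X_j] = C_{ij}^k P_k`) satisfy
`[X'_i, Y_k] = 0` and `[X'_i, X_j] = C_{ij}^k (X_k f + P_k)`.  Then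
`[X'_i, X'_j] = f · C_{ij}^k X'_k`, i.e. the `X'_i` generate a virtual copy of the Levi
subalgebra `s`. -/
theorem stmt3 (A : Type) [Ring A] [Algebra ℝ A]
    (nn mm : ℕ) (X : Fin nn → A) (Y : Fin mm → A)
    (C : Fin nn → Fin nn → Fin nn → ℝ)
    (hXC : ∀ i j, ⁅X i, X j⁆ = ∑ k, C i j k • X k)
    (f : A) (P : Fin nn → A)
    (hfY : f ∈ Algebra.adjoin ℝ (Set.range Y))
    (hPY : ∀ i, P i ∈ Algebra.adjoin ℝ (Set.range Y))
    (hfYc : ∀ j, ⁅f, Y j⁆ = 0) (hfXc : ∀ i, ⁅f, X i⁆ = 0)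
    (hPX : ∀ i j, ⁅P i, X j⁆ = ∑ k, C i j k • P k)
    (h1 : ∀ i k, ⁅X i * f + P i, Y k⁆ = 0)
    (h2 : ∀ i j, ⁅X i * f + P i, X j⁆ = ∑ k, C i j k • (X k * f + P k)) :
    ∀ i j, ⁅X i * f + P i, X j * f + P j⁆
      = f * ∑ k, C i j k • (X k * f + P k) := by
  intro i j
  set a := X i * f + P i with ha
  -- a commutes with everything built from the Y's
  have haY : ∀ k, Commute a (Y k) := by
    intro k
    have := h1 i k
    rw [Ring.lie_def, sub_eq_zero] at this
    exact this
  have hcomm := commute_adjoin_range Y a haY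
  have haf : Commute a f := hcomm f hfY
  have haP : Commute a (P j) := hcomm _ (hPY j)
  -- f commutes with everything built from the Y's
  have hfYcomm : ∀ k, Commute f (Y k) := by
    intro k
    have := hfYc k
    rw [Ring.lie_def, sub_eq_zero] at this
    exact this
  have hfcomm := commute_adjoin_range Y f hfYcomm
  have hfX : ∀ k, Commute f (X k) := by
    intro k
    have := hfXc k
    rw [Ring.lie_def, sub_eq_zero] at this
    exact this
  have hfX' : ∀ k, Commute f (X k * f + P k) := fun k =>
    ((hfX k).mul_right (Commute.refl f)).add_right (hfcomm _ (hPY k))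
  have expand : ⁅a, X j * f + P j⁆ = ⁅a, X j⁆ * f := by
    simp only [Ring.lie_def]
    have h1' : a * P j = P j * a := haP
    have h2' : a * f = f * a := haf
    calc a * (X j * f + P j) - (X j * f + P j) * a
        = (a * X j - X j * a) * f + X j * (a * f - f * a) + (a * P j - P j * a) := by
          noncomm_ring
      _ = (a * X j - X j * a) * f := by rw [h1', h2']; simp
  rw [expand, h2 i j]
  have : Commute f (∑ k, C i j k • (X k * f + P k)) :=
    Commute.sum_right _ _ _ fun k _ => (hfX' k).smul_right _
  exact this.eq.symm
end

section
/- For d = p + q ≥ 3 and half-integer ℓ ≥ 1/2, the bracket relations of the generalized conformal pseudo-Galilean algebra Gal_ℓ(p,q) — on generators H, D, C, E_{ij} (i<j), P_{n,i} (0 ≤ n ≤ 2ℓ, 1 ≤ i ≤ d), M with [D,H]=2H, [D,C]=−2C, [C,H]=D, [H,P_{n,i}]=−nP_{n−1,i}, [D,P_{n,i}]=2(ℓ−n)P_{n,i}, [C,P_{n,i}]=(2ℓ−n)P_{n+1,i}, [E_{ij},P_{n,k}]=g_{ik}P_{n,j}−g_{jk}P_{n,i}, [E_{ij},E_{kl}]=g_{ik}E_{jl}+g_{jl}E_{ik}−g_{il}E_{jk}−g_{jk}E_{il},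 [P_{m,i},P_{n,j}]=g_{ij}δ_{m+n,2ℓ}(−1)^{m+ℓ+1/2}(2ℓ−m)! m! M, and M central — satisfy the Jacobi identity, hence define a Lie algebra of dimension 4 + d(d−1)/2 + (2ℓ+1)d. -/
/-!
The relations are realised by explicit real matrices, so the Jacobi identity is inherited from
the associativity of matrix multiplication. On `V = ℝ^{2ℓ+1} ⊗ ℝ^d`, `sl(2,ℝ)` acts on the first
factor by its irreducible representation (`H e_n = -n e_{n-1}`, `D e_n = (2ℓ-2n) e_n`,
`C e_n = (2ℓ-n) e_{n+1}`) and `so(p,q)` acts on the second by the `g`-skew matrices `E_{ij}`.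
Both actions are skew for the antisymmetric form `Ω = ω ⊗ g`, where
`ω(e_m, e_n) = (-1)^(m+ℓ+1/2) m! (2ℓ-m)!` if `m + n = 2ℓ` and `0` otherwise. Embedding an
`Ω`-skew `A` as `[[0, 0, 0], [0, A, 0], [0, 0, 0]]`, a vector `v ∈ V` as
`[[0, vᵀΩ/2, 0], [0, 0, v], [0, 0, 0]]` and `M` as the corner matrix unit gives `[A, v] = A v`
and `[u, v] = Ω(u, v) M`, which with `P_{n,i} = e_n ⊗ e_i` are the defining relations. Each
generator has a matrix entry at which all the others vanish, so the generators are linearly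
independent; their brackets are again combinations of generators, so their span is a Lie
subalgebra.
-/

/-- Index type for a basis of `Gal_ℓ(p,q)` with `ℓ = t + 1/2`, `d = p + q`:
the `sl(2,ℝ)` generators `H, D, C`, the central element `M`, the generators
`E_{ij}` (`i < j`) of `so(p,q)`, and the `P_{n,i}` (`0 ≤ n ≤ 2ℓ = 2t+1`). -/
def GalIdx (d t : ℕ) : Type :=
  (Fin 3 ⊕ Unit) ⊕ ({pr : Fin d × Fin d // pr.1 < pr.2} ⊕ (Fin (2 * t + 2) × Fin d))

open Matrix
open scoped Kronecker

attribute [local instance] LieRing.ofAssociativeRing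

namespace Matrix

variable {R n : Type*} [CommRing R]

/-- The block matrix `[[0, w, z], [0, A, v], [0, 0, 0]]`. -/
def upperBlock (A : Matrix n n R) (v w : n → R) (z : R) :
    Matrix (Unit ⊕ n ⊕ Unit) (Unit ⊕ n ⊕ Unit) R :=
  of fun
    | .inl _, .inr (.inl j) => w j
    | .inl _, .inr (.inr _) => z
    | .inr (.inl i), .inr (.inl j) => A i j
    | .inr (.inl i), .inr (.inr _) => v i
    | _, _ => 0

section Entries

variable (A : Matrix n n R) (v w : n → R) (z : R) (i j : n) (u u' : Unit)

@[simp]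
theorem upperBlock_apply_mid_mid : upperBlock A v w z (.inr (.inl i)) (.inr (.inl j)) = A i j :=
  rfl

@[simp]
theorem upperBlock_apply_mid_last : upperBlock A v w z (.inr (.inl i)) (.inr (.inr u)) = v i :=
  rfl

@[simp]
theorem upperBlock_apply_first_last : upperBlock A v w z (.inl u) (.inr (.inr u')) = z :=
  rfl

end Entries

@[simp]
theorem upperBlock_zero : upperBlock (0 : Matrix n n R) 0 0 0 = 0 := by
  ext (_ | i | _) (_ | j | _) <;> simp [upperBlock]

theorem upperBlock_add_upperBlock (A A' : Matrix n n R) (v v' w w' : n → R) (z z' : R) :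
    upperBlock A v w z + upperBlock A' v' w' z' =
      upperBlock (A + A') (v + v') (w + w') (z + z') := by
  ext (_ | i | _) (_ | j | _) <;> simp [upperBlock]

theorem upperBlock_sub_upperBlock (A A' : Matrix n n R) (v v' w w' : n → R) (z z' : R) :
    upperBlock A v w z - upperBlock A' v' w' z' =
      upperBlock (A - A') (v - v') (w - w') (z - z') := by
  ext (_ | i | _) (_ | j | _) <;> simp [upperBlock]

theorem smul_upperBlock (c : R) (A : Matrix n n R) (v w : n → R) (z : R) :
    c • upperBlock A v w z = upperBlock (c • A) (c • v) (c • w) (c • z) := by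
  ext (_ | i | _) (_ | j | _) <;> simp [upperBlock]

variable [Fintype n]

def heisBlock (B : Matrix n n R) (v : n → R) :
    Matrix (Unit ⊕ n ⊕ Unit) (Unit ⊕ n ⊕ Unit) R :=
  upperBlock 0 v (v ᵥ* B) 0

@[simp]
theorem heisBlock_zero (B : Matrix n n R) : heisBlock B 0 = 0 := by
  simp [heisBlock]

theorem heisBlock_smul (B : Matrix n n R) (c : R) (v : n → R) :
    heisBlock B (c • v) = c • heisBlock B v := by
  simp [heisBlock, smul_upperBlock, smul_vecMul]

theorem heisBlock_sub (B : Matrix n n R) (u v : n → R) :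
    heisBlock B (u - v) = heisBlock B u - heisBlock B v := by
  simp [heisBlock, upperBlock_sub_upperBlock, sub_vecMul]

theorem upperBlock_mul_upperBlock (A A' : Matrix n n R) (v v' w w' : n → R) (z z' : R) :
    upperBlock A v w z * upperBlock A' v' w' z' =
      upperBlock (A * A') (A *ᵥ v') (w ᵥ* A') (w ⬝ᵥ v') := by
  ext (_ | i | _) (_ | j | _) <;>
    simp [upperBlock, mul_apply, Fintype.sum_sum_type, mulVec, vecMul, dotProduct]

variable [DecidableEq n]

theorem lie_upperBlock (A A' : Matrix n n R) (v v' w w' : n → R) (z z' : R) :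
    ⁅upperBlock A v w z, upperBlock A' v' w' z'⁆ =
      upperBlock ⁅A, A'⁆ (A *ᵥ v' - A' *ᵥ v) (w ᵥ* A' - w' ᵥ* A)
        (w ⬝ᵥ v' - w' ⬝ᵥ v) := by
  rw [Ring.lie_def, Ring.lie_def, upperBlock_mul_upperBlock, upperBlock_mul_upperBlock,
    upperBlock_sub_upperBlock]

variable (R n) in
def upperBlockLieHom :
    Matrix n n R →ₗ⁅R⁆ Matrix (Unit ⊕ n ⊕ Unit) (Unit ⊕ n ⊕ Unit) R where
  toFun A := upperBlock A 0 0 0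
  map_add' A A' := by simp [upperBlock_add_upperBlock]
  map_smul' c A := by simp [smul_upperBlock]
  map_lie' := by simp [lie_upperBlock]

theorem upperBlockLieHom_apply (A : Matrix n n R) :
    upperBlockLieHom R n A = upperBlock A 0 0 0 :=
  rfl

theorem lie_upperBlockLieHom_heisBlock {A B : Matrix n n R} (hA : B.IsSkewAdjoint A)
    (v : n → R) : ⁅upperBlockLieHom R n A, heisBlock B v⁆ = heisBlock B (A *ᵥ v) := by
  have hB : (A *ᵥ v) ᵥ* B = -(v ᵥ* B ᵥ* A) := by
    rw [← vecMul_transpose, vecMul_vecMul, show Aᵀ * B = B * -A from hA, vecMul_vecMul, mul_neg,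
      vecMul_neg]
  simp [upperBlockLieHom_apply, heisBlock, lie_upperBlock, hB]

theorem lie_heisBlock_heisBlock (B : Matrix n n R) (u v : n → R) :
    ⁅heisBlock B u, heisBlock B v⁆ = upperBlock 0 0 0 (u ⬝ᵥ (B - Bᵀ) *ᵥ v) := by
  have h : (v ᵥ* B) ⬝ᵥ u = u ⬝ᵥ Bᵀ *ᵥ v := by
    rw [mulVec_transpose, dotProduct_comm]
  simp [heisBlock, lie_upperBlock, sub_mulVec, dotProduct_sub, dotProduct_mulVec, h]

theorem lie_upperBlock_center (A : Matrix n n R) (v w : n → R) (z : R) :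
    ⁅upperBlock (0 : Matrix n n R) 0 0 1, upperBlock A v w z⁆ = 0 := by
  simp [lie_upperBlock]

end Matrix

section Sl2

variable {R : Type*} [CommRing R]

variable (R) in
/-- The `n`-th standard basis vector of `R^k`; it is `0` when `k ≤ n`. -/
def basisVec (k n : ℕ) : Fin k → R :=
  fun a => if (a : ℕ) = n then 1 else 0

theorem basisVec_val {k : ℕ} (a : Fin k) : basisVec R k a = Pi.single a 1 := by
  ext b
  simp [basisVec, Pi.single_apply, Fin.ext_iff]

theorem basisVec_of_le {k n : ℕ} (h : k ≤ n) : basisVec R k n = 0 := by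
  ext a
  simp [basisVec, (a.isLt.trans_le h).ne]

def ofCols {k : ℕ} (f : ℕ → Fin k → R) : Matrix (Fin k) (Fin k) R := of fun a b => f b a

theorem ofCols_mulVec_basisVec {k n : ℕ} (f : ℕ → Fin k → R) (h : n < k) :
    ofCols f *ᵥ basisVec R k n = f n := by
  rw [show n = (⟨n, h⟩ : Fin k) from rfl, basisVec_val, mulVec_single_one]
  rfl

theorem ext_of_basisVec {N : ℕ} {A B : Matrix (Fin (N + 1)) (Fin (N + 1)) R}
    (h : ∀ n ≤ N, A *ᵥ basisVec R (N + 1) n = B *ᵥ basisVec R (N + 1) n) : A = B :=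
  ext_of_mulVec_single fun b => by
    simpa only [basisVec_val] using h b (Nat.lt_succ_iff.mp b.isLt)

variable (R) (N : ℕ)

def sl2H : Matrix (Fin (N + 1)) (Fin (N + 1)) R :=
  ofCols fun n => (-n : R) • basisVec R (N + 1) (n - 1)

def sl2D : Matrix (Fin (N + 1)) (Fin (N + 1)) R :=
  ofCols fun n => ((N : R) - 2 * n) • basisVec R (N + 1) n

def sl2C : Matrix (Fin (N + 1)) (Fin (N + 1)) R :=
  ofCols fun n => ((N : R) - n) • basisVec R (N + 1) (n + 1)

variable {R N}

theorem sl2H_mulVec {n : ℕ} (h : n ≤ N) :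
    sl2H R N *ᵥ basisVec R (N + 1) n = (-n : R) • basisVec R (N + 1) (n - 1) :=
  ofCols_mulVec_basisVec _ (by omega)

theorem sl2D_mulVec {n : ℕ} (h : n ≤ N) :
    sl2D R N *ᵥ basisVec R (N + 1) n = ((N : R) - 2 * n) • basisVec R (N + 1) n :=
  ofCols_mulVec_basisVec _ (by omega)

theorem sl2C_mulVec {n : ℕ} (h : n ≤ N) :
    sl2C R N *ᵥ basisVec R (N + 1) n = ((N : R) - n) • basisVec R (N + 1) (n + 1) :=
  ofCols_mulVec_basisVec _ (by omega)

theorem lie_sl2D_sl2H : ⁅sl2D R N, sl2H R N⁆ = (2 : R) • sl2H R N := by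
  refine ext_of_basisVec fun n hn => ?_
  rw [Ring.lie_def, sub_mulVec, smul_mulVec, ← mulVec_mulVec, ← mulVec_mulVec, sl2H_mulVec hn,
    sl2D_mulVec hn, mulVec_smul, mulVec_smul, sl2H_mulVec hn, sl2D_mulVec (by omega), smul_smul,
    smul_smul, smul_smul, ← sub_smul]
  rcases n with _ | n
  · simp
  · congr 1
    push_cast
    ring

theorem lie_sl2D_sl2C : ⁅sl2D R N, sl2C R N⁆ = (-2 : R) • sl2C R N := by
  refine ext_of_basisVec fun n hn => ?_
  rw [Ring.lie_def, sub_mulVec, smul_mulVec, ← mulVec_mulVec, ← mulVec_mulVec, sl2C_mulVec hn,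
    sl2D_mulVec hn, mulVec_smul, mulVec_smul, sl2C_mulVec hn, smul_smul, smul_smul]
  rcases hn.lt_or_eq with hn | rfl
  · rw [sl2D_mulVec hn, smul_smul, ← sub_smul]
    congr 1
    push_cast
    ring
  · simp [basisVec_of_le]

theorem lie_sl2C_sl2H : ⁅sl2C R N, sl2H R N⁆ = sl2D R N := by
  refine ext_of_basisVec fun n hn => ?_
  rw [Ring.lie_def, sub_mulVec, ← mulVec_mulVec, ← mulVec_mulVec, sl2H_mulVec hn,
    sl2C_mulVec hn, mulVec_smul, mulVec_smul, sl2D_mulVec hn]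
  rcases hn.lt_or_eq with hn | rfl
  · rw [sl2H_mulVec hn, smul_smul]
    rcases n with _ | n
    · simp
    · rw [sl2C_mulVec (by omega), smul_smul]
      simp only [Nat.succ_sub_one, ← sub_smul]
      congr 1
      push_cast
      ring
  · rcases n with _ | n
    · simp [basisVec_of_le]
    · rw [sl2C_mulVec (by omega), basisVec_of_le le_rfl]
      simp only [Nat.add_sub_cancel, smul_smul, mulVec_zero, smul_zero, sub_zero]
      congr 1
      push_cast
      ring

variable (R N) in
def sl2FormCoeff (m n : ℕ) : R :=
  if m + n = N then (-1) ^ m * ((N - m).factorial : R) * (m.factorial : R) else 0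

variable (R N) in
def sl2Form : Matrix (Fin (N + 1)) (Fin (N + 1)) R := of fun a b => sl2FormCoeff R N a b

theorem basisVec_dotProduct_sl2Form_mulVec (m n : ℕ) :
    basisVec R (N + 1) m ⬝ᵥ sl2Form R N *ᵥ basisVec R (N + 1) n = sl2FormCoeff R N m n := by
  by_cases hm : m ≤ N
  · by_cases hn : n ≤ N
    · rw [show m = ((⟨m, by omega⟩ : Fin (N + 1)) : ℕ) from rfl,
        show n = ((⟨n, by omega⟩ : Fin (N + 1)) : ℕ) from rfl, basisVec_val, basisVec_val,
        mulVec_single_one, single_one_dotProduct]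
      rfl
    · simp [basisVec_of_le (show N + 1 ≤ n by omega), sl2FormCoeff, show m + n ≠ N by omega]
  · simp [basisVec_of_le (show N + 1 ≤ m by omega), sl2FormCoeff, show m + n ≠ N by omega]

theorem sl2FormCoeff_succ (m n : ℕ) :
    (m + 1 : R) * sl2FormCoeff R N m (n + 1) + (n + 1 : R) * sl2FormCoeff R N (m + 1) n = 0 := by
  by_cases h : m + n + 1 = N
  · subst h
    rw [sl2FormCoeff, sl2FormCoeff, if_pos (by omega), if_pos (by omega),
      show m + n + 1 - m = n + 1 by omega, show m + n + 1 - (m + 1) = n by omega,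
      Nat.factorial_succ, Nat.factorial_succ, pow_succ]
    push_cast
    ring
  · simp [sl2FormCoeff, show m + (n + 1) ≠ N by omega, show m + 1 + n ≠ N by omega]

theorem sl2Form_transpose (hN : Odd N) : (sl2Form R N)ᵀ = -sl2Form R N := by
  ext a b
  rw [transpose_apply, Matrix.neg_apply]
  simp only [sl2Form, of_apply, sl2FormCoeff]
  by_cases h : (b : ℕ) + a = N
  · have hsign : (-1 : R) ^ (b : ℕ) = -(-1) ^ (a : ℕ) := by
      have hba : (-1 : R) ^ (b : ℕ) * (-1) ^ (a : ℕ) = -1 := by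
        rw [← pow_add, h, hN.neg_one_pow]
      have haa : (-1 : R) ^ (a : ℕ) * (-1) ^ (a : ℕ) = 1 := by
        rw [← pow_add, ← two_mul, pow_mul, neg_one_sq, one_pow]
      linear_combination (-1) ^ (a : ℕ) * hba - (-1) ^ (b : ℕ) * haa
    rw [if_pos h, if_pos (by omega), hsign, show N - b = a by omega, show N - a = b by omega]
    ring
  · rw [if_neg h, if_neg (by omega), neg_zero]

theorem isSkewAdjoint_of_basisVec {A J : Matrix (Fin (N + 1)) (Fin (N + 1)) R}
    (h : ∀ m ≤ N, ∀ n ≤ N,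
      (A *ᵥ basisVec R (N + 1) m) ⬝ᵥ J *ᵥ basisVec R (N + 1) n =
        -(basisVec R (N + 1) m ⬝ᵥ J *ᵥ (A *ᵥ basisVec R (N + 1) n))) :
    J.IsSkewAdjoint A := by
  ext a b
  have := h a (by omega) b (by omega)
  simp only [basisVec_val, mulVec_single_one, single_one_dotProduct] at this
  simpa [Matrix.IsAdjointPair, mul_apply, dotProduct, mulVec] using this

theorem isSkewAdjoint_sl2H : (sl2Form R N).IsSkewAdjoint (sl2H R N) := by
  refine isSkewAdjoint_of_basisVec fun m hm n hn => ?_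
  rw [sl2H_mulVec hm, sl2H_mulVec hn, smul_dotProduct, mulVec_smul, dotProduct_smul,
    basisVec_dotProduct_sl2Form_mulVec, basisVec_dotProduct_sl2Form_mulVec, smul_eq_mul,
    smul_eq_mul]
  rcases m with _ | m <;> rcases n with _ | n
  · simp
  · simp [sl2FormCoeff, show n ≠ N by omega]
  · simp [sl2FormCoeff, show m ≠ N by omega]
  · simp only [Nat.add_sub_cancel]
    push_cast
    linear_combination (-1 : R) * sl2FormCoeff_succ (R := R) (N := N) m n

theorem isSkewAdjoint_sl2D : (sl2Form R N).IsSkewAdjoint (sl2D R N) := by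
  refine isSkewAdjoint_of_basisVec fun m hm n hn => ?_
  rw [sl2D_mulVec hm, sl2D_mulVec hn, smul_dotProduct, mulVec_smul, dotProduct_smul,
    basisVec_dotProduct_sl2Form_mulVec, smul_eq_mul, smul_eq_mul, sl2FormCoeff]
  split_ifs with h
  · rw [← h]
    push_cast
    ring
  · simp

theorem isSkewAdjoint_sl2C : (sl2Form R N).IsSkewAdjoint (sl2C R N) := by
  refine isSkewAdjoint_of_basisVec fun m hm n hn => ?_
  rw [sl2C_mulVec hm, sl2C_mulVec hn, smul_dotProduct, mulVec_smul, dotProduct_smul,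
    basisVec_dotProduct_sl2Form_mulVec, basisVec_dotProduct_sl2Form_mulVec, smul_eq_mul,
    smul_eq_mul]
  by_cases h : m + n + 1 = N
  · subst h
    push_cast
    linear_combination sl2FormCoeff_succ (R := R) (N := m + n + 1) m n
  · simp [sl2FormCoeff, show m + 1 + n ≠ N by omega, show m + (n + 1) ≠ N by omega]

end Sl2

section Orthogonal

variable {R : Type*} [CommRing R]
variable {ι : Type*} [DecidableEq ι]

def soGen (g : ι → R) (i j : ι) : Matrix ι ι R := g i • single j i 1 - g j • single i j 1

theorem soGen_swap (g : ι → R) (i j : ι) : soGen g j i = -soGen g i j := by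
  rw [soGen, soGen, neg_sub]

@[simp]
theorem soGen_self (g : ι → R) (i : ι) : soGen g i i = 0 :=
  sub_self _

variable [Fintype ι]

theorem single_one_mul_single_one (a b c e : ι) :
    (single a b 1 : Matrix ι ι R) * single c e 1 = if b = c then single a e 1 else 0 := by
  split_ifs with h
  · rw [h, single_mul_single_same, mul_one]
  · exact single_mul_single_of_ne (c := (1 : R)) a b c h 1

theorem soGen_mulVec_single (g : ι → R) (i j k : ι) :
    soGen g i j *ᵥ Pi.single k 1 =
      (if k = i then g i else 0) • Pi.single j 1
        - (if k = j then g j else 0) • Pi.single i 1 := by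
  ext x
  simp only [soGen, sub_mulVec, smul_mulVec, single_mulVec, Pi.sub_apply, Pi.smul_apply,
    Function.update_apply, Pi.single_apply, Pi.zero_apply]
  split_ifs <;> subst_vars <;> simp_all

theorem soGen_eq_mul_diagonal (g : ι → R) (i j : ι) :
    soGen g i j = (single j i 1 - single i j 1) * diagonal g := by
  ext a b
  simp only [soGen, sub_mul, Matrix.sub_apply, Matrix.smul_apply, mul_diagonal, single_apply]
  split_ifs with h1 h2 h2
  · simp [h1.2, ← h2.2]
  · simp [h1.2]
  · simp [h2.2]
  · simp

theorem isSkewAdjoint_soGen (g : ι → R) (i j : ι) :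
    (diagonal g).IsSkewAdjoint (soGen g i j) := by
  show (soGen g i j)ᵀ * diagonal g = diagonal g * -soGen g i j
  rw [soGen_eq_mul_diagonal, transpose_mul, diagonal_transpose, transpose_sub, transpose_single,
    transpose_single, ← neg_sub, Matrix.mul_neg, Matrix.neg_mul, Matrix.mul_neg, Matrix.mul_assoc]

theorem lie_soGen (g : ι → R) (i j k l : ι) :
    ⁅soGen g i j, soGen g k l⁆ =
      (if i = k then g i else 0) • soGen g j l + (if j = l then g j else 0) • soGen g i k
        - (if i = l then g i else 0) • soGen g j k
        - (if j = k then g j else 0) • soGen g i l := by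
  simp only [soGen, Ring.lie_def, sub_mul, mul_sub, smul_mul_smul, single_one_mul_single_one,
    smul_sub, smul_smul]
  by_cases hik : i = k <;> by_cases hjl : j = l <;> by_cases hil : i = l <;>
    by_cases hjk : j = k <;>
    (try subst hik) <;> (try subst hjl) <;> (try subst hil) <;> (try subst hjk) <;>
    split_ifs <;> simp_all <;> module

end Orthogonal

theorem linearIndependent_of_dual {K V ι : Type*} [Field K] [AddCommGroup V] [Module K V]
    {f : ι → V} (φ : ι → V →ₗ[K] K) (hself : ∀ a, φ a (f a) ≠ 0)
    (hne : ∀ a b, φ a (f b) ≠ 0 → a = b) : LinearIndependent K f := by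
  rw [linearIndependent_iff']
  intro s g hg i hi
  have h := congrArg (φ i) hg
  rw [map_sum, map_zero, Finset.sum_eq_single i (fun b _ hb => ?_) (absurd hi)] at h
  · simpa [hself i] using h
  · rw [map_smul, smul_eq_mul]
    by_contra hc
    exact hb (hne i b (right_ne_zero_of_mul hc)).symm

theorem lie_mem_span_range {R L ι : Type*} [CommRing R] [LieRing L] [LieAlgebra R L] {f : ι → L}
    (hf : ∀ a b, ⁅f a, f b⁆ ∈ Submodule.span R (Set.range f)) {x y : L}
    (hx : x ∈ Submodule.span R (Set.range f)) (hy : y ∈ Submodule.span R (Set.range f)) :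
    ⁅x, y⁆ ∈ Submodule.span R (Set.range f) := by
  induction hx, hy using Submodule.span_induction₂ with
  | mem_mem x y hx hy =>
    obtain ⟨a, rfl⟩ := hx
    obtain ⟨b, rfl⟩ := hy
    exact hf a b
  | zero_left y _ => simp
  | zero_right x _ => simp
  | add_left x y z _ _ _ hx hy => simpa using add_mem hx hy
  | add_right x y z _ _ _ hx hy => simpa using add_mem hx hy
  | smul_left r x y _ _ h => simpa using Submodule.smul_mem _ r h
  | smul_right r x y _ _ h => simpa using Submodule.smul_mem _ r h

section Kronecker

variable {R : Type*} [CommRing R] {m p : Type*}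

def kroneckerVec (u : m → R) (v : p → R) : m × p → R := fun x => u x.1 * v x.2

@[simp]
theorem zero_kroneckerVec (v : p → R) : kroneckerVec (0 : m → R) v = 0 := by
  ext x
  simp [kroneckerVec]

theorem kroneckerVec_smul_left (c : R) (u : m → R) (v : p → R) :
    kroneckerVec (c • u) v = c • kroneckerVec u v := by
  ext x
  simp [kroneckerVec, mul_assoc]

theorem kroneckerVec_sub_right (u : m → R) (v v' : p → R) :
    kroneckerVec u (v - v') = kroneckerVec u v - kroneckerVec u v' := by
  ext x
  simp [kroneckerVec, mul_sub]

theorem kroneckerVec_smul_right (c : R) (u : m → R) (v : p → R) :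
    kroneckerVec u (c • v) = c • kroneckerVec u v := by
  ext x
  simp [kroneckerVec, mul_left_comm]

variable [Fintype m] [Fintype p]

theorem kronecker_mulVec_kroneckerVec {l n : Type*} (A : Matrix l m R) (B : Matrix n p R)
    (u : m → R) (v : p → R) :
    (A ⊗ₖ B) *ᵥ kroneckerVec u v = kroneckerVec (A *ᵥ u) (B *ᵥ v) := by
  ext ⟨a, i⟩
  simp only [mulVec, dotProduct, kroneckerVec, Fintype.sum_prod_type, kronecker_apply,
    Finset.sum_mul_sum]
  exact Finset.sum_congr rfl fun _ _ => Finset.sum_congr rfl fun _ _ => by ring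

theorem kroneckerVec_dotProduct_kroneckerVec (u u' : m → R) (v v' : p → R) :
    kroneckerVec u v ⬝ᵥ kroneckerVec u' v' = (u ⬝ᵥ u') * (v ⬝ᵥ v') := by
  simp only [dotProduct, kroneckerVec, Fintype.sum_prod_type, Finset.sum_mul_sum]
  exact Finset.sum_congr rfl fun _ _ => Finset.sum_congr rfl fun _ _ => by ring

theorem Matrix.IsSkewAdjoint.smul {J A : Matrix m m R} (hA : J.IsSkewAdjoint A) (c : R) :
    (c • J).IsSkewAdjoint A := by
  show Aᵀ * (c • J) = (c • J) * -A
  rw [Matrix.mul_smul, show Aᵀ * J = J * -A from hA, Matrix.smul_mul]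

theorem Matrix.IsSkewAdjoint.kronecker_one [DecidableEq p] {J A : Matrix m m R}
    (hA : J.IsSkewAdjoint A) (K : Matrix p p R) : (J ⊗ₖ K).IsSkewAdjoint (A ⊗ₖ 1) := by
  show (A ⊗ₖ 1)ᵀ * (J ⊗ₖ K) = (J ⊗ₖ K) * -(A ⊗ₖ 1)
  rw [← kroneckerMap_transpose, transpose_one, ← mul_kronecker_mul,
    show Aᵀ * J = J * -A from hA, Matrix.mul_neg, Matrix.mul_neg, ← mul_kronecker_mul,
    Matrix.one_mul, Matrix.mul_one]
  ext ⟨a, i⟩ ⟨b, j⟩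
  simp

theorem Matrix.IsSkewAdjoint.one_kronecker [DecidableEq m] {K B : Matrix p p R}
    (hB : K.IsSkewAdjoint B) (J : Matrix m m R) : (J ⊗ₖ K).IsSkewAdjoint (1 ⊗ₖ B) := by
  show (1 ⊗ₖ B)ᵀ * (J ⊗ₖ K) = (J ⊗ₖ K) * -(1 ⊗ₖ B)
  rw [← kroneckerMap_transpose, transpose_one, ← mul_kronecker_mul,
    show Bᵀ * K = K * -B from hB, Matrix.mul_neg, Matrix.mul_neg, ← mul_kronecker_mul,
    Matrix.one_mul, Matrix.mul_one]
  ext ⟨a, i⟩ ⟨b, j⟩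
  simp

variable [DecidableEq m] [DecidableEq p]

variable (R m p) in
def kroneckerOneLieHom : Matrix m m R →ₗ⁅R⁆ Matrix (m × p) (m × p) R where
  toFun A := A ⊗ₖ 1
  map_add' A A' := add_kronecker A A' 1
  map_smul' c A := smul_kronecker c A 1
  map_lie' {A A'} := by
    rw [Ring.lie_def, Ring.lie_def, ← mul_kronecker_mul, ← mul_kronecker_mul, Matrix.one_mul]
    ext ⟨a, i⟩ ⟨b, j⟩
    simp [sub_mul]

variable (R m p) in
def oneKroneckerLieHom : Matrix p p R →ₗ⁅R⁆ Matrix (m × p) (m × p) R where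
  toFun B := 1 ⊗ₖ B
  map_add' B B' := kronecker_add 1 B B'
  map_smul' c B := kronecker_smul c 1 B
  map_lie' {B B'} := by
    rw [Ring.lie_def, Ring.lie_def, ← mul_kronecker_mul, ← mul_kronecker_mul, Matrix.one_mul]
    ext ⟨a, i⟩ ⟨b, j⟩
    simp [mul_sub]

theorem lie_kroneckerOneLieHom_oneKroneckerLieHom (A : Matrix m m R) (B : Matrix p p R) :
    ⁅kroneckerOneLieHom R m p A, oneKroneckerLieHom R m p B⁆ = 0 := by
  show ⁅A ⊗ₖ 1, 1 ⊗ₖ B⁆ = 0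
  rw [Ring.lie_def, ← mul_kronecker_mul, ← mul_kronecker_mul, Matrix.one_mul, Matrix.one_mul,
    Matrix.mul_one, Matrix.mul_one, sub_self]

end Kronecker

noncomputable section

namespace GalConformal

variable (d t p : ℕ)

def metricSign (i : Fin d) : ℝ := if (i : ℕ) < p then 1 else -1

abbrev SlMatrix := Matrix (Fin (2 * t + 1 + 1)) (Fin (2 * t + 1 + 1)) ℝ

abbrev GalEntry := Unit ⊕ (Fin (2 * t + 1 + 1) × Fin d) ⊕ Unit

abbrev GalMatrix := Matrix (GalEntry d t) (GalEntry d t) ℝ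

def sl2Embed : SlMatrix t →ₗ⁅ℝ⁆ GalMatrix d t :=
  (upperBlockLieHom ℝ _).comp (kroneckerOneLieHom ℝ _ _)

def soEmbed : Matrix (Fin d) (Fin d) ℝ →ₗ⁅ℝ⁆ GalMatrix d t :=
  (upperBlockLieHom ℝ _).comp (oneKroneckerLieHom ℝ _ _)

theorem sl2Embed_apply (A : SlMatrix t) :
    sl2Embed d t A = upperBlockLieHom ℝ _ (A ⊗ₖ (1 : Matrix (Fin d) (Fin d) ℝ)) :=
  rfl

theorem soEmbed_apply (B : Matrix (Fin d) (Fin d) ℝ) :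
    soEmbed d t B = upperBlockLieHom ℝ _ ((1 : Matrix (Fin (2 * t + 1 + 1)) _ ℝ) ⊗ₖ B) :=
  rfl

def pVec (n : ℕ) (i : Fin d) : Fin (2 * t + 1 + 1) × Fin d → ℝ :=
  kroneckerVec (basisVec ℝ (2 * t + 1 + 1) n) (Pi.single i 1)

/-- Since `ℓ + 1/2 = t + 1`, the sign `(-1)^(m+ℓ+1/2)` of the bracket `[P_m, P_n]` is
`(-1)^(t+1)` times the sign `(-1)^m` of `sl2Form`; the `1/2` compensates the antisymmetrisation
in `lie_heisBlock_heisBlock`. -/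
def pForm : Matrix (Fin (2 * t + 1 + 1) × Fin d) (Fin (2 * t + 1 + 1) × Fin d) ℝ :=
  ((-1) ^ (t + 1) / 2 : ℝ) • (sl2Form ℝ (2 * t + 1) ⊗ₖ diagonal (metricSign d p))

def genH : GalMatrix d t := sl2Embed d t (sl2H ℝ (2 * t + 1))

def genD : GalMatrix d t := sl2Embed d t (sl2D ℝ (2 * t + 1))

def genC : GalMatrix d t := sl2Embed d t (sl2C ℝ (2 * t + 1))

def genM : GalMatrix d t := upperBlock 0 0 0 1

def genE (i j : Fin d) : GalMatrix d t := soEmbed d t (soGen (metricSign d p) i j)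

def genP (n : ℕ) (i : Fin d) : GalMatrix d t := heisBlock (pForm d t p) (pVec d t n i)

variable {d t p}

theorem metricSign_ne_zero (i : Fin d) : metricSign d p i ≠ 0 := by
  unfold metricSign
  split_ifs <;> norm_num

theorem isSkewAdjoint_pForm_kronecker_one {A : SlMatrix t}
    (hA : (sl2Form ℝ (2 * t + 1)).IsSkewAdjoint A) :
    (pForm d t p).IsSkewAdjoint (A ⊗ₖ (1 : Matrix (Fin d) (Fin d) ℝ)) :=
  (hA.kronecker_one _).smul _

theorem isSkewAdjoint_pForm_one_kronecker_soGen (i j : Fin d) :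
    (pForm d t p).IsSkewAdjoint
      ((1 : Matrix (Fin (2 * t + 1 + 1)) _ ℝ) ⊗ₖ soGen (metricSign d p) i j) :=
  ((isSkewAdjoint_soGen _ i j).one_kronecker _).smul _

theorem genE_swap (i j : Fin d) : genE d t p j i = -genE d t p i j := by
  rw [genE, genE, soGen_swap, map_neg]

theorem genP_of_lt {n : ℕ} (hn : 2 * t + 1 < n) (i : Fin d) : genP d t p n i = 0 := by
  simp [genP, pVec, basisVec_of_le (show 2 * t + 1 + 1 ≤ n by omega)]

theorem lie_genD_genH : ⁅genD d t, genH d t⁆ = (2 : ℝ) • genH d t := by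
  rw [genD, genH, ← LieHom.map_lie, lie_sl2D_sl2H, map_smul]

theorem lie_genD_genC : ⁅genD d t, genC d t⁆ = (-2 : ℝ) • genC d t := by
  rw [genD, genC, ← LieHom.map_lie, lie_sl2D_sl2C, map_smul]

theorem lie_genC_genH : ⁅genC d t, genH d t⁆ = genD d t := by
  rw [genC, genH, ← LieHom.map_lie, lie_sl2C_sl2H, genD]

theorem lie_sl2Embed_soEmbed (A : SlMatrix t)
    (B : Matrix (Fin d) (Fin d) ℝ) : ⁅sl2Embed d t A, soEmbed d t B⁆ = 0 := by
  rw [sl2Embed, soEmbed, LieHom.comp_apply, LieHom.comp_apply, ← LieHom.map_lie,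
    lie_kroneckerOneLieHom_oneKroneckerLieHom, map_zero]

theorem lie_sl2Embed_genP {A : SlMatrix t}
    (hA : (sl2Form ℝ (2 * t + 1)).IsSkewAdjoint A) (n : ℕ) (i : Fin d) :
    ⁅sl2Embed d t A, genP d t p n i⁆ =
      heisBlock (pForm d t p) (kroneckerVec (A *ᵥ basisVec ℝ _ n) (Pi.single i 1)) := by
  rw [sl2Embed_apply, genP, lie_upperBlockLieHom_heisBlock
    (isSkewAdjoint_pForm_kronecker_one hA), pVec,
    kronecker_mulVec_kroneckerVec, one_mulVec]

theorem lie_genH_genP {n : ℕ} (hn : n ≤ 2 * t + 1) (i : Fin d) :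
    ⁅genH d t, genP d t p n i⁆ = (-(n : ℝ)) • genP d t p (n - 1) i := by
  rw [genH, lie_sl2Embed_genP isSkewAdjoint_sl2H, sl2H_mulVec hn, kroneckerVec_smul_left,
    heisBlock_smul]
  rfl

theorem lie_genD_genP {n : ℕ} (hn : n ≤ 2 * t + 1) (i : Fin d) :
    ⁅genD d t, genP d t p n i⁆ = ((2 * t + 1 : ℝ) - 2 * n) • genP d t p n i := by
  rw [genD, lie_sl2Embed_genP isSkewAdjoint_sl2D, sl2D_mulVec hn, kroneckerVec_smul_left,
    heisBlock_smul]
  push_cast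
  rfl

theorem lie_genC_genP {n : ℕ} (hn : n ≤ 2 * t + 1) (i : Fin d) :
    ⁅genC d t, genP d t p n i⁆ = ((2 * t + 1 : ℝ) - n) • genP d t p (n + 1) i := by
  rw [genC, lie_sl2Embed_genP isSkewAdjoint_sl2C, sl2C_mulVec hn, kroneckerVec_smul_left,
    heisBlock_smul]
  push_cast
  rfl

theorem lie_genE_genP (i j : Fin d) (n : ℕ) (k : Fin d) :
    ⁅genE d t p i j, genP d t p n k⁆ =
      (if k = i then metricSign d p i else 0) • genP d t p n j
        - (if k = j then metricSign d p j else 0) • genP d t p n i := by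
  rw [genE, soEmbed_apply, genP,
    lie_upperBlockLieHom_heisBlock (isSkewAdjoint_pForm_one_kronecker_soGen i j), pVec,
    kronecker_mulVec_kroneckerVec, one_mulVec, soGen_mulVec_single, kroneckerVec_sub_right,
    kroneckerVec_smul_right, kroneckerVec_smul_right, heisBlock_sub, heisBlock_smul,
    heisBlock_smul]
  rfl

theorem lie_genE_genE (i j k l : Fin d) :
    ⁅genE d t p i j, genE d t p k l⁆ =
      (if i = k then metricSign d p i else 0) • genE d t p j l
        + (if j = l then metricSign d p j else 0) • genE d t p i k
        - (if i = l then metricSign d p i else 0) • genE d t p j k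
        - (if j = k then metricSign d p j else 0) • genE d t p i l := by
  simp only [genE, ← LieHom.map_lie, lie_soGen, map_add, map_sub, map_smul]

theorem pForm_sub_transpose :
    pForm d t p - (pForm d t p)ᵀ =
      ((-1) ^ (t + 1) : ℝ) • (sl2Form ℝ (2 * t + 1) ⊗ₖ diagonal (metricSign d p)) := by
  rw [pForm, transpose_smul, ← kroneckerMap_transpose, sl2Form_transpose ⟨t, rfl⟩,
    diagonal_transpose]
  ext ⟨a, x⟩ ⟨b, y⟩
  simp
  ring

theorem lie_genP_genP (m n : ℕ) (i j : Fin d) :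
    ⁅genP d t p m i, genP d t p n j⁆ =
      (if i = j ∧ m + n = 2 * t + 1 then
        metricSign d p i * (-1 : ℝ) ^ (m + t + 1) * (2 * t + 1 - m).factorial * m.factorial
      else 0) • genM d t := by
  rw [genP, genP, lie_heisBlock_heisBlock, pForm_sub_transpose, smul_mulVec, dotProduct_smul,
    pVec, pVec, kronecker_mulVec_kroneckerVec, kroneckerVec_dotProduct_kroneckerVec,
    basisVec_dotProduct_sl2Form_mulVec, genM, smul_upperBlock]
  simp only [sl2FormCoeff, smul_zero, smul_eq_mul, mul_one, diagonal_mulVec_single,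
    single_one_dotProduct]
  congr 1
  rcases eq_or_ne i j with rfl | hij
  · simp only [Pi.single_eq_same, true_and]
    split_ifs <;> ring
  · simp [hij]

variable (d t) in
def sl2Gen : Fin 3 → GalMatrix d t := ![genH d t, genD d t, genC d t]

variable (d t p) in
def genFamily : GalIdx d t → GalMatrix d t :=
  Sum.elim (Sum.elim (sl2Gen d t) fun _ => genM d t)
    (Sum.elim (fun pr => genE d t p pr.1.1 pr.1.2) fun w => genP d t p w.1 w.2)

theorem genFamily_sl2 (a : Fin 3) : genFamily d t p (.inl (.inl a)) = sl2Gen d t a := rfl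

theorem genFamily_so (pr : {pr : Fin d × Fin d // pr.1 < pr.2}) :
    genFamily d t p (.inr (.inl pr)) = genE d t p pr.1.1 pr.1.2 := rfl

theorem genFamily_heis (w : Fin (2 * t + 2) × Fin d) :
    genFamily d t p (.inr (.inr w)) = genP d t p w.1 w.2 := rfl

local notation "S" => Submodule.span ℝ (Set.range (genFamily d t p))

theorem genH_mem : genH d t ∈ S := Submodule.subset_span ⟨.inl (.inl 0), rfl⟩

theorem genD_mem : genD d t ∈ S := Submodule.subset_span ⟨.inl (.inl 1), rfl⟩

theorem genC_mem : genC d t ∈ S := Submodule.subset_span ⟨.inl (.inl 2), rfl⟩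

theorem genM_mem : genM d t ∈ S := Submodule.subset_span ⟨.inl (.inr ()), rfl⟩

theorem genE_mem (i j : Fin d) : genE d t p i j ∈ S := by
  rcases lt_trichotomy i j with h | rfl | h
  · exact Submodule.subset_span ⟨.inr (.inl ⟨(i, j), h⟩), rfl⟩
  · rw [genE, soGen_self, map_zero]
    exact zero_mem _
  · rw [← neg_neg (genE d t p i j), ← genE_swap]
    exact neg_mem (Submodule.subset_span ⟨.inr (.inl ⟨(j, i), h⟩), rfl⟩)

theorem genP_mem (n : ℕ) (i : Fin d) : genP d t p n i ∈ S := by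
  by_cases hn : n ≤ 2 * t + 1
  · exact Submodule.subset_span ⟨.inr (.inr (⟨n, by omega⟩, i)), rfl⟩
  · rw [genP_of_lt (by omega)]
    exact zero_mem _

theorem lie_genM_genFamily (a : GalIdx d t) : ⁅genM d t, genFamily d t p a⁆ = 0 := by
  rcases a with (a | _) | (_ | _)
  · fin_cases a <;> exact lie_upperBlock_center _ _ _ _
  all_goals exact lie_upperBlock_center _ _ _ _

theorem lie_genM_of_mem {x : GalMatrix d t} (hx : x ∈ S) : ⁅genM d t, x⁆ = 0 := by
  induction hx using Submodule.span_induction with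
  | mem x hx => obtain ⟨a, rfl⟩ := hx; exact lie_genM_genFamily a
  | zero => exact lie_zero _
  | add x y _ _ hx hy => rw [lie_add, hx, hy, add_zero]
  | smul c x _ hx => rw [lie_smul, hx, smul_zero]

theorem lie_mem_of_lie_mem_swap {x y : GalMatrix d t} (h : ⁅y, x⁆ ∈ S) :
    ⁅x, y⁆ ∈ S := by
  rw [← lie_skew]
  exact neg_mem h

theorem sl2Gen_mem (a : Fin 3) : sl2Gen d t a ∈ S := by
  fin_cases a
  exacts [genH_mem, genD_mem, genC_mem]

theorem lie_sl2Gen_genE (a : Fin 3) (i j : Fin d) :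
    ⁅sl2Gen d t a, genE d t p i j⁆ = 0 := by
  fin_cases a <;> exact lie_sl2Embed_soEmbed _ _

theorem lie_sl2Gen_sl2Gen_mem (a b : Fin 3) :
    ⁅sl2Gen d t a, sl2Gen d t b⁆ ∈ S := by
  fin_cases a <;> fin_cases b <;>
    first
    | simp [sl2Gen, lie_genD_genH, lie_genD_genC, lie_genC_genH, genH_mem, genD_mem, genC_mem]; done
    | apply lie_mem_of_lie_mem_swap
      simp [sl2Gen, lie_genD_genH, lie_genD_genC, lie_genC_genH, genH_mem, genD_mem, genC_mem]

theorem lie_sl2Gen_genP_mem (a : Fin 3) {n : ℕ} (hn : n ≤ 2 * t + 1) (i : Fin d) :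
    ⁅sl2Gen d t a, genP d t p n i⁆ ∈ S := by
  fin_cases a <;> simp [sl2Gen, lie_genH_genP hn, lie_genD_genP hn, lie_genC_genP hn] <;>
    exact Submodule.smul_mem _ _ (genP_mem _ _)

theorem lie_genFamily_mem (a b : GalIdx d t) :
    ⁅genFamily d t p a, genFamily d t p b⁆ ∈ S := by
  have hle (w : Fin (2 * t + 2)) : (w : ℕ) ≤ 2 * t + 1 := Nat.le_of_lt_succ w.isLt
  have hM (c : GalIdx d t) : ⁅genM d t, genFamily d t p c⁆ ∈ S :=
    (lie_genM_genFamily c).symm ▸ zero_mem _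
  rcases a with (a | ⟨⟩) | (⟨⟨i, j⟩, _⟩ | ⟨m, i⟩)
  case inl.inr => exact hM b
  all_goals rcases b with (b | ⟨⟩) | (⟨⟨k, l⟩, _⟩ | ⟨n, k⟩)
  case inl.inl.inl.inr | inr.inl.inl.inr | inr.inr.inl.inr => exact lie_mem_of_lie_mem_swap (hM _)
  all_goals simp only [genFamily_sl2, genFamily_so, genFamily_heis]
  case inl.inl.inl.inl => exact lie_sl2Gen_sl2Gen_mem a b
  case inl.inl.inr.inl => exact (lie_sl2Gen_genE a k l).symm ▸ zero_mem _
  case inl.inl.inr.inr => exact lie_sl2Gen_genP_mem a (hle n) k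
  case inr.inl.inl.inl =>
    exact lie_mem_of_lie_mem_swap ((lie_sl2Gen_genE b i j).symm ▸ zero_mem _)
  case inr.inl.inr.inl =>
    rw [lie_genE_genE]
    refine sub_mem (sub_mem (add_mem ?_ ?_) ?_) ?_ <;> exact Submodule.smul_mem _ _ (genE_mem _ _)
  case inr.inl.inr.inr =>
    rw [lie_genE_genP]
    exact sub_mem (Submodule.smul_mem _ _ (genP_mem _ _)) (Submodule.smul_mem _ _ (genP_mem _ _))
  case inr.inr.inl.inl => exact lie_mem_of_lie_mem_swap (lie_sl2Gen_genP_mem b (hle m) i)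
  case inr.inr.inr.inl =>
    refine lie_mem_of_lie_mem_swap ?_
    rw [lie_genE_genP]
    exact sub_mem (Submodule.smul_mem _ _ (genP_mem _ _)) (Submodule.smul_mem _ _ (genP_mem _ _))
  case inr.inr.inr.inr =>
    rw [lie_genP_genP]
    exact Submodule.smul_mem _ _ genM_mem

variable (t) in
/-- An entry at which the generator `a` is nonzero and all other generators vanish. -/
def probe (hd : 0 < d) : GalIdx d t → GalEntry d t × GalEntry d t
  | .inl (.inl a) => ![(.inr (.inl (0, ⟨0, hd⟩)), .inr (.inl (1, ⟨0, hd⟩))),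
      (.inr (.inl (0, ⟨0, hd⟩)), .inr (.inl (0, ⟨0, hd⟩))),
      (.inr (.inl (1, ⟨0, hd⟩)), .inr (.inl (0, ⟨0, hd⟩)))] a
  | .inl (.inr _) => (.inl (), .inr (.inr ()))
  | .inr (.inl pr) => (.inr (.inl (0, pr.1.2)), .inr (.inl (0, pr.1.1)))
  | .inr (.inr w) => (.inr (.inl w), .inr (.inr ()))

theorem genFamily_probe_self (hd : 0 < d) (a : GalIdx d t) :
    genFamily d t p a (probe t hd a).1 (probe t hd a).2 ≠ 0 := by
  rcases a with (a | ⟨⟩) | (⟨⟨i, j⟩, hij⟩ | ⟨m, i⟩)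
  all_goals (try fin_cases a) <;>
    simp [probe, genFamily, sl2Gen, genH, genD, genC, genM, genE, genP, heisBlock, pVec,
      kroneckerVec, sl2Embed_apply, soEmbed_apply, upperBlockLieHom_apply, sl2H, sl2D, sl2C, ofCols,
      basisVec, one_apply, soGen]
  all_goals first | positivity | simp [hij.ne, metricSign_ne_zero]

theorem eq_of_genFamily_probe_ne_zero (hd : 0 < d) {a b : GalIdx d t}
    (h : genFamily d t p b (probe t hd a).1 (probe t hd a).2 ≠ 0) : a = b := by
  rcases a with (a | ⟨⟩) | (⟨⟨i, j⟩, hij⟩ | ⟨m, i⟩) <;>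
    rcases b with (b | ⟨⟩) | (⟨⟨k, l⟩, hkl⟩ | ⟨n, k⟩)
  all_goals (try fin_cases a) <;> (try fin_cases b) <;>
    simp [probe, genFamily, sl2Gen, genH, genD, genC, genM, genE, genP, heisBlock, pVec,
      kroneckerVec, sl2Embed_apply, soEmbed_apply, upperBlockLieHom_apply, sl2H, sl2D, sl2C, ofCols,
      basisVec, one_apply, soGen, single_apply] at h ⊢
  all_goals first
    | rfl
    | exact absurd h.1 hij.ne'
    | obtain ⟨hmn, hk⟩ := h
      obtain rfl : k = i := by by_contra hki; exact hk (Pi.single_eq_of_ne (Ne.symm hki) _)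
      rw [Fin.ext hmn]
    | split_ifs at h with h₁ h₂ h₂ <;>
        first
        | simp at h; done
        | obtain ⟨rfl, rfl⟩ := h₁
          first | rfl | exact absurd hkl (lt_irrefl _)
        | obtain ⟨rfl, rfl⟩ := h₂
          first | exact absurd hkl (lt_irrefl _) | exact absurd (hij.trans hkl) (lt_irrefl _)

theorem linearIndependent_genFamily (hd : 0 < d) : LinearIndependent ℝ (genFamily d t p) :=
  linearIndependent_of_dual (fun a => entryLinearMap ℝ ℝ (probe t hd a).1 (probe t hd a).2)
    (genFamily_probe_self hd) fun _ _ => eq_of_genFamily_probe_ne_zero hd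

variable (d t p) in
def galAlgebra : LieSubalgebra ℝ (GalMatrix d t) :=
  { Submodule.span ℝ (Set.range (genFamily d t p)) with
    lie_mem' := fun hx hy => lie_mem_span_range lie_genFamily_mem hx hy }

instance : Fintype (GalIdx d t) :=
  inferInstanceAs (Fintype ((Fin 3 ⊕ Unit) ⊕
    ({pr : Fin d × Fin d // pr.1 < pr.2} ⊕ (Fin (2 * t + 2) × Fin d))))

theorem card_galIdx : Fintype.card (GalIdx d t) = 4 + d * (d - 1) / 2 + (2 * t + 2) * d := by
  show Fintype.card ((Fin 3 ⊕ Unit) ⊕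
    ({pr : Fin d × Fin d // pr.1 < pr.2} ⊕ (Fin (2 * t + 2) × Fin d))) = _
  simp only [Fintype.card_sum, Fintype.card_subtype, Fintype.card_product_filter_lt,
    Fintype.card_fin, Fintype.card_unit, Fintype.card_prod, Nat.choose_two_right]
  ring

theorem galAlgebra_basis (hd : 0 < d) (F : GalIdx d t → galAlgebra d t p)
    (hF : ∀ a, (F a : GalMatrix d t) = genFamily d t p a) :
    LinearIndependent ℝ F ∧ Submodule.span ℝ (Set.range F) = ⊤ ∧
      Module.finrank ℝ (galAlgebra d t p) = 4 + d * (d - 1) / 2 + (2 * t + 2) * d := by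
  have hcomp : (galAlgebra d t p).toSubmodule.subtype ∘ F = genFamily d t p := funext hF
  have hli : LinearIndependent ℝ F :=
    LinearIndependent.of_comp _ (hcomp ▸ linearIndependent_genFamily hd)
  have hspan : Submodule.span ℝ (Set.range F) = ⊤ := by
    apply Submodule.map_injective_of_injective (galAlgebra d t p).toSubmodule.injective_subtype
    rw [Submodule.map_span, ← Set.range_comp, hcomp, Submodule.map_top, Submodule.range_subtype]
    rfl
  refine ⟨hli, hspan, ?_⟩
  rw [Module.finrank_eq_card_basis (Module.Basis.mk hli hspan.ge), card_galIdx]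

end GalConformal

end

open GalConformal

theorem stmt5_general (d t p : ℕ) (hd : 3 ≤ d) :
    ∃ (L : Type) (_ : LieRing L) (_ : LieAlgebra ℝ L)
      (XH XD XC XM : L) (XE : Fin d → Fin d → L) (XP : ℕ → Fin d → L),
      (∀ i j, XE i j = - XE j i) ∧
      (∀ n, 2 * t + 1 < n → ∀ i, XP n i = 0) ∧
      -- sl(2,ℝ) relations
      ⁅XD, XH⁆ = (2 : ℝ) • XH ∧ ⁅XD, XC⁆ = (-2 : ℝ) • XC ∧ ⁅XC, XH⁆ = XD ∧
      -- action of sl(2,ℝ) on the P's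
      (∀ n ≤ 2 * t + 1, ∀ i, ⁅XH, XP n i⁆ = (-(n : ℝ)) • XP (n - 1) i) ∧
      (∀ n ≤ 2 * t + 1, ∀ i,
        ⁅XD, XP n i⁆ = ((2 * t + 1 : ℝ) - 2 * n) • XP n i) ∧
      (∀ n ≤ 2 * t + 1, ∀ i,
        ⁅XC, XP n i⁆ = ((2 * t + 1 : ℝ) - n) • XP (n + 1) i) ∧
      -- action of so(p,q) on the P's
      (∀ (i j : Fin d) (n : ℕ), n ≤ 2 * t + 1 → ∀ k,
        ⁅XE i j, XP n k⁆ = (if k = i then (if (i : ℕ) < p then (1:ℝ) else -1) else 0) • XP n j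
          - (if k = j then (if (j : ℕ) < p then (1:ℝ) else -1) else 0) • XP n i) ∧
      -- so(p,q) relations
      (∀ i j k l : Fin d,
        ⁅XE i j, XE k l⁆ =
          (if i = k then (if (i : ℕ) < p then (1:ℝ) else -1) else 0) • XE j l
          + (if j = l then (if (j : ℕ) < p then (1:ℝ) else -1) else 0) • XE i k
          - (if i = l then (if (i : ℕ) < p then (1:ℝ) else -1) else 0) • XE j k
          - (if j = k then (if (j : ℕ) < p then (1:ℝ) else -1) else 0) • XE i l) ∧
      -- Heisenberg relations
      (∀ m ≤ 2 * t + 1, ∀ n ≤ 2 * t + 1, ∀ i j,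
        ⁅XP m i, XP n j⁆ =
          (if i = j ∧ m + n = 2 * t + 1 then
            (if (i : ℕ) < p then (1:ℝ) else -1) * (-1 : ℝ) ^ (m + t + 1)
              * (2 * t + 1 - m).factorial * m.factorial
          else 0) • XM) ∧
      -- M is central
      (∀ x : L, ⁅XM, x⁆ = 0) ∧
      -- the generators form a basis
      LinearIndependent ℝ
        (Sum.elim (Sum.elim ![XH, XD, XC] (fun _ : Unit => XM))
          (Sum.elim (fun pr : {pr : Fin d × Fin d // pr.1 < pr.2} => XE pr.1.1 pr.1.2)
            (fun w : Fin (2 * t + 2) × Fin d => XP w.1 w.2)) : GalIdx d t → L) ∧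
      Submodule.span ℝ
        (Set.range (Sum.elim (Sum.elim ![XH, XD, XC] (fun _ : Unit => XM))
          (Sum.elim (fun pr : {pr : Fin d × Fin d // pr.1 < pr.2} => XE pr.1.1 pr.1.2)
            (fun w : Fin (2 * t + 2) × Fin d => XP w.1 w.2)) : GalIdx d t → L)) = ⊤ ∧
      Module.finrank ℝ L = 4 + d * (d - 1) / 2 + (2 * t + 2) * d := by
  refine ⟨galAlgebra d t p, inferInstance, inferInstance, ⟨genH d t, genH_mem⟩,
    ⟨genD d t, genD_mem⟩, ⟨genC d t, genC_mem⟩, ⟨genM d t, genM_mem⟩,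
    fun i j => ⟨genE d t p i j, genE_mem i j⟩,
    fun n i => ⟨genP d t p n i, genP_mem n i⟩, fun i j => Subtype.ext (genE_swap j i),
    fun n hn i => Subtype.ext (genP_of_lt hn i), Subtype.ext lie_genD_genH,
    Subtype.ext lie_genD_genC, Subtype.ext lie_genC_genH,
    fun n hn i => Subtype.ext (lie_genH_genP hn i), fun n hn i => Subtype.ext (lie_genD_genP hn i),
    fun n hn i => Subtype.ext (lie_genC_genP hn i),
    fun i j n _ k => Subtype.ext (lie_genE_genP i j n k),
    fun i j k l => Subtype.ext (lie_genE_genE i j k l),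
    fun m _ n _ i j => Subtype.ext (lie_genP_genP m n i j),
    fun x => Subtype.ext (lie_genM_of_mem x.2), ?_⟩
  exact galAlgebra_basis (by omega) _ fun a => by
    rcases a with (a | _) | _ | _ <;> (try fin_cases a) <;> rfl

/-- For `d = p + q ≥ 3` and half-integer `ℓ = t + 1/2 ≥ 1/2`, the bracket
relations of the generalized conformal pseudo-Galilean algebra `Gal_ℓ(p,q)` satisfy the
Jacobi identity, hence define a Lie algebra of dimension `4 + d(d-1)/2 + (2ℓ+1)d`:
there exists a real Lie algebra with a basis of generators `H, D, C, M, E_{ij}, P_{n,i}`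
realizing exactly these relations. -/
theorem stmt5 (d t p q : ℕ) (hd : 3 ≤ d) (hpq : p + q = d) :
    ∃ (L : Type) (_ : LieRing L) (_ : LieAlgebra ℝ L)
      (XH XD XC XM : L) (XE : Fin d → Fin d → L) (XP : ℕ → Fin d → L),
      (∀ i j, XE i j = - XE j i) ∧
      (∀ n, 2 * t + 1 < n → ∀ i, XP n i = 0) ∧
      -- sl(2,ℝ) relations
      ⁅XD, XH⁆ = (2 : ℝ) • XH ∧ ⁅XD, XC⁆ = (-2 : ℝ) • XC ∧ ⁅XC, XH⁆ = XD ∧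
      -- action of sl(2,ℝ) on the P's
      (∀ n ≤ 2 * t + 1, ∀ i, ⁅XH, XP n i⁆ = (-(n : ℝ)) • XP (n - 1) i) ∧
      (∀ n ≤ 2 * t + 1, ∀ i,
        ⁅XD, XP n i⁆ = ((2 * t + 1 : ℝ) - 2 * n) • XP n i) ∧
      (∀ n ≤ 2 * t + 1, ∀ i,
        ⁅XC, XP n i⁆ = ((2 * t + 1 : ℝ) - n) • XP (n + 1) i) ∧
      -- action of so(p,q) on the P's
      (∀ (i j : Fin d) (n : ℕ), n ≤ 2 * t + 1 → ∀ k,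
        ⁅XE i j, XP n k⁆ = (if k = i then (if (i : ℕ) < p then (1:ℝ) else -1) else 0) • XP n j
          - (if k = j then (if (j : ℕ) < p then (1:ℝ) else -1) else 0) • XP n i) ∧
      -- so(p,q) relations
      (∀ i j k l : Fin d,
        ⁅XE i j, XE k l⁆ =
          (if i = k then (if (i : ℕ) < p then (1:ℝ) else -1) else 0) • XE j l
          + (if j = l then (if (j : ℕ) < p then (1:ℝ) else -1) else 0) • XE i k
          - (if i = l then (if (i : ℕ) < p then (1:ℝ) else -1) else 0) • XE j k
          - (if j = k then (if (j : ℕ) < p then (1:ℝ) else -1) else 0) • XE i l) ∧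
      -- Heisenberg relations
      (∀ m ≤ 2 * t + 1, ∀ n ≤ 2 * t + 1, ∀ i j,
        ⁅XP m i, XP n j⁆ =
          (if i = j ∧ m + n = 2 * t + 1 then
            (if (i : ℕ) < p then (1:ℝ) else -1) * (-1 : ℝ) ^ (m + t + 1)
              * (2 * t + 1 - m).factorial * m.factorial
          else 0) • XM) ∧
      -- M is central
      (∀ x : L, ⁅XM, x⁆ = 0) ∧
      -- the generators form a basis
      LinearIndependent ℝ
        (Sum.elim (Sum.elim ![XH, XD, XC] (fun _ : Unit => XM))
          (Sum.elim (fun pr : {pr : Fin d × Fin d // pr.1 < pr.2} => XE pr.1.1 pr.1.2)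
            (fun w : Fin (2 * t + 2) × Fin d => XP w.1 w.2)) : GalIdx d t → L) ∧
      Submodule.span ℝ
        (Set.range (Sum.elim (Sum.elim ![XH, XD, XC] (fun _ : Unit => XM))
          (Sum.elim (fun pr : {pr : Fin d × Fin d // pr.1 < pr.2} => XE pr.1.1 pr.1.2)
            (fun w : Fin (2 * t + 2) × Fin d => XP w.1 w.2)) : GalIdx d t → L)) = ⊤ ∧
      Module.finrank ℝ L = 4 + d * (d - 1) / 2 + (2 * t + 2) * d :=
  stmt5_general d t p hd
end

section
/- Let ℓ ∈ ℤ + 1/2, ℓ ≥ 1/2, and d = p + q ≥ 3. In the universal enveloping algebra of Gal_ℓ(p,q), the elements Ẽ_{ij} = M E_{ij} + Σ_{s=0}^{ℓ-1/2} ((−1)^{(2ℓ−1)/2 + s}/(s!(2ℓ−s)!)) (P_{s,i}P_{2ℓ−s,j} − P_{s,j}P_{2ℓ−s,i}), for 1 ≤ i < j ≤ d, commute with all generators P_{n,k} (0 ≤ n ≤ 2ℓ, 1 ≤ k ≤ d). -/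
/-!
Write `N = 2ℓ = 2t + 1`. Since `M` is central, `⁅M E_ij, P_nk⁆ = M ⁅E_ij, P_nk⁆`, and by the
Leibniz rule a quadratic term `P_{s,x} P_{N-s,y}` brackets with `P_{n,k}` to a multiple of
`M P_{n,·}` only when one of its factors is `P_{N-n,k}`. As `s` runs over `0, …, t`, exactly one
of `s = n`, `N - s = n` happens (according as `n ≤ t` or `n > t`), and the coefficient
`(-1)^(t+s) / (s! (N-s)!)` inverts the structure constant of the Heisenberg bracket. Either way
the quadratic part contributes exactly `-M ⁅E_ij, P_nk⁆`.
-/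

open Finset
open scoped Nat

theorem Ring.mul_lie {A : Type*} [Ring A] (a b c : A) : ⁅a * b, c⁆ = a * ⁅b, c⁆ + ⁅a, c⁆ * b := by
  simp only [Ring.lie_def]
  noncomm_ring

theorem neg_one_pow_div_factorial_mul (g : ℝ) (a b c e : ℕ) :
    (-1 : ℝ) ^ a / (b ! * c !) * (g * (-1) ^ e * b ! * c !) = g * (-1) ^ (a + e) := by
  field_simp
  ring

section

attribute [local instance] LieRing.ofAssociativeRing

variable {A ι : Type*} [Ring A] [Algebra ℝ A] [DecidableEq ι] {t : ℕ} {M : A} {P : ℕ → ι → A}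
  {g : ι → ℝ}

def HeisenbergRelations (t : ℕ) (g : ι → ℝ) (M : A) (P : ℕ → ι → A) : Prop :=
  ∀ m ≤ 2 * t + 1, ∀ n ≤ 2 * t + 1, ∀ i j,
    ⁅P m i, P n j⁆ =
      (if i = j ∧ m + n = 2 * t + 1 then
        g i * (-1 : ℝ) ^ (m + t + 1) * (2 * t + 1 - m).factorial * m.factorial
      else 0) • M

theorem HeisenbergRelations.smul_mul_lie_P (hPP : HeisenbergRelations t g M P)
    (hM : ∀ a : A, ⁅M, a⁆ = 0)
    {s n : ℕ} (hs : s ≤ 2 * t + 1) (hn : n ≤ 2 * t + 1) (x y k : ι) :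
    ((-1 : ℝ) ^ (t + s) / (s ! * (2 * t + 1 - s)!)) • (P s x * ⁅P (2 * t + 1 - s) y, P n k⁆) =
      if s = n then if k = y then g y • (M * P n x) else 0 else 0 := by
  rw [hPP _ (Nat.sub_le _ _) n hn]
  by_cases hsn : s = n
  · subst hsn
    simp only [Nat.sub_add_cancel hs, Nat.sub_sub_self hs, and_true, if_true, eq_comm (a := y)]
    split_ifs with hyk
    · rw [mul_smul_comm, smul_smul, neg_one_pow_div_factorial_mul,
        (commute_iff_lie_eq.2 (hM _)).eq, Even.neg_one_pow ⟨2 * t + 1, by omega⟩, mul_one]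
    · simp
  · rw [if_neg fun h => hsn (by omega), if_neg hsn, zero_smul, mul_zero, smul_zero]

theorem HeisenbergRelations.smul_lie_P_mul (hPP : HeisenbergRelations t g M P)
    {s n : ℕ} (hs : s ≤ 2 * t + 1) (hn : n ≤ 2 * t + 1) (x y k : ι) :
    ((-1 : ℝ) ^ (t + s) / (s ! * (2 * t + 1 - s)!)) • (⁅P s x, P n k⁆ * P (2 * t + 1 - s) y) =
      -if s = 2 * t + 1 - n then if k = x then g x • (M * P n y) else 0 else 0 := by
  rw [hPP s hs n hn]
  by_cases hsn : s = 2 * t + 1 - n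
  · subst hsn
    simp only [Nat.sub_add_cancel hn, Nat.sub_sub_self hn, and_true, if_true, eq_comm (a := x)]
    split_ifs with hxk
    · rw [smul_mul_assoc, smul_smul, mul_right_comm _ (n ! : ℝ), neg_one_pow_div_factorial_mul,
        Odd.neg_one_pow ⟨t + (2 * t + 1 - n), by omega⟩, mul_neg_one, neg_smul]
    · simp
  · rw [if_neg fun h => hsn (by omega), if_neg hsn, zero_smul, zero_mul, smul_zero, neg_zero]

theorem HeisenbergRelations.lie_sum_smul_mul (hPP : HeisenbergRelations t g M P)
    (hM : ∀ a : A, ⁅M, a⁆ = 0) {n : ℕ} (hn : n ≤ 2 * t + 1) (x y k : ι) :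
    ⁅∑ s ∈ range (t + 1),
        ((-1 : ℝ) ^ (t + s) / (s ! * (2 * t + 1 - s)!)) • (P s x * P (2 * t + 1 - s) y), P n k⁆ =
      (if n ≤ t then if k = y then g y • (M * P n x) else 0 else 0) -
        (if t < n then if k = x then g x • (M * P n y) else 0 else 0) := by
  have hrange : ∀ s ∈ range (t + 1), s ≤ 2 * t + 1 := fun s hs => by
    rw [mem_range] at hs; omega
  rw [sum_lie, sum_congr rfl fun s _ => by rw [smul_lie, Ring.mul_lie, smul_add],
    sum_add_distrib,
    sum_congr rfl fun s hs => hPP.smul_mul_lie_P hM (hrange s hs) hn x y k,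
    sum_congr rfl fun s hs => hPP.smul_lie_P_mul (hrange s hs) hn x y k,
    sum_neg_distrib, sum_ite_eq', sum_ite_eq', ← sub_eq_add_neg]
  simp only [mem_range, Nat.lt_succ_iff, show 2 * t + 1 - n ≤ t ↔ t < n by omega]

end

theorem stmt8_general (A : Type) [Ring A] [Algebra ℝ A] (d t : ℕ)
    (XM : A) (XE : Fin d → Fin d → A) (XP : ℕ → Fin d → A)
    (gm : Fin d → ℝ)
    (hEP : ∀ (i j : Fin d) (n : ℕ), n ≤ 2 * t + 1 → ∀ k,
      ⁅XE i j, XP n k⁆ = (if k = i then gm i else 0) • XP n j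
        - (if k = j then gm j else 0) • XP n i)
    (hPP : ∀ m ≤ 2 * t + 1, ∀ n ≤ 2 * t + 1, ∀ i j,
      ⁅XP m i, XP n j⁆ =
        (if i = j ∧ m + n = 2 * t + 1 then
          gm i * (-1 : ℝ) ^ (m + t + 1) * (2 * t + 1 - m).factorial * m.factorial
        else 0) • XM)
    (hM : ∀ a : A, ⁅XM, a⁆ = 0) :
    ∀ (i j : Fin d), i < j → ∀ n ≤ 2 * t + 1, ∀ k : Fin d,
      ⁅XM * XE i j + ∑ s ∈ Finset.range (t + 1),
          ((-1 : ℝ) ^ (t + s) / (s.factorial * (2 * t + 1 - s).factorial)) •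
            (XP s i * XP (2 * t + 1 - s) j - XP s j * XP (2 * t + 1 - s) i),
        XP n k⁆ = 0 := by
  have hH : HeisenbergRelations t gm XM XP := hPP
  let _ : LieRing A := LieRing.ofAssociativeRing
  intro i j _ n hn k
  simp only [smul_sub, sum_sub_distrib, add_lie, sub_lie, Ring.mul_lie, hM, zero_mul, add_zero,
    hEP i j n hn k, hH.lie_sum_smul_mul hM hn]
  obtain ⟨hle, hlt⟩ | ⟨hle, hlt⟩ : n ≤ t ∧ ¬t < n ∨ ¬n ≤ t ∧ t < n := by omega
  all_goals by_cases hki : k = i <;> by_cases hkj : k = j <;>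
    simp [hle, hlt, hki, hkj, mul_sub]

/-- In the universal enveloping algebra of `Gal_ℓ(p,q)` (`ℓ = t + 1/2`),
the elements
`Ẽ_{ij} = M E_{ij} + Σ_{s=0}^{ℓ-1/2} ((-1)^{(2ℓ-1)/2+s}/(s!(2ℓ-s)!)) (P_{s,i}P_{2ℓ-s,j} - P_{s,j}P_{2ℓ-s,i})`
for `i < j` commute with all the generators `P_{n,k}`. -/
theorem stmt8 (A : Type) [Ring A] [Algebra ℝ A] (d t p' q' : ℕ) (hd : 3 ≤ d)
    (hpq : p' + q' = d)
    (XM : A) (XE : Fin d → Fin d → A) (XP : ℕ → Fin d → A)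
    (gm : Fin d → ℝ) (hgm : ∀ i, gm i = if (i : ℕ) < p' then 1 else -1)
    (hXP0 : ∀ n, 2 * t + 1 < n → ∀ i, XP n i = 0)
    (hEP : ∀ (i j : Fin d) (n : ℕ), n ≤ 2 * t + 1 → ∀ k,
      ⁅XE i j, XP n k⁆ = (if k = i then gm i else 0) • XP n j
        - (if k = j then gm j else 0) • XP n i)
    (hPP : ∀ m ≤ 2 * t + 1, ∀ n ≤ 2 * t + 1, ∀ i j,
      ⁅XP m i, XP n j⁆ =
        (if i = j ∧ m + n = 2 * t + 1 then
          gm i * (-1 : ℝ) ^ (m + t + 1) * (2 * t + 1 - m).factorial * m.factorial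
        else 0) • XM)
    (hM : ∀ a : A, ⁅XM, a⁆ = 0) :
    ∀ (i j : Fin d), i < j → ∀ n ≤ 2 * t + 1, ∀ k : Fin d,
      ⁅XM * XE i j + ∑ s ∈ Finset.range (t + 1),
          ((-1 : ℝ) ^ (t + s) / (s.factorial * (2 * t + 1 - s).factorial)) •
            (XP s i * XP (2 * t + 1 - s) j - XP s j * XP (2 * t + 1 - s) i),
        XP n k⁆ = 0 :=
  stmt8_general A d t XM XE XP gm hEP hPP hM
end

section
/- The elements Ẽ_{ij} defined above satisfy [Ẽ_{ij}, Ẽ_{kl}] = M (g_{ik} Ẽ_{jl} + g_{jl} Ẽ_{ik} − g_{il} Ẽ_{jk} − g_{jk} Ẽ_{il}) in the enveloping algebra of Gal_ℓ(p,q); i.e. they generate a virtual copy of so(p,q). -/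
/-- The element `Ẽ_{ij} = M E_{ij} + Σ_{s=0}^{ℓ-1/2}
((-1)^{(2ℓ-1)/2+s}/(s!(2ℓ-s)!)) (P_{s,i}P_{2ℓ-s,j} - P_{s,j}P_{2ℓ-s,i})`
of the enveloping algebra of `Gal_ℓ(p,q)`, with `ℓ = t + 1/2`. -/
noncomputable def Etilde (A : Type) [Ring A] [Algebra ℝ A] {d : ℕ} (t : ℕ)
    (XM : A) (XE : Fin d → Fin d → A) (XP : ℕ → Fin d → A) (i j : Fin d) : A :=
  XM * XE i j + ∑ s ∈ Finset.range (t + 1),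
    ((-1 : ℝ) ^ (t + s) / (s.factorial * (2 * t + 1 - s).factorial)) •
      (XP s i * XP (2 * t + 1 - s) j - XP s j * XP (2 * t + 1 - s) i)

/-!
Write `Ẽ_{ij} = M E_{ij} + S_{ij}` with `S_{ij} = Σ_s (x_{s,i} y_{s,j} - x_{s,j} y_{s,i})`, where
`x_s = c_s P_s`, `y_s = P_{2ℓ-s}` and `c_s = (-1)^{(2ℓ-1)/2+s}/(s!(2ℓ-s)!)`. Since every `P_n` is an
`so(p,q)`-vector, `S` is an antisymmetric `so(p,q)`-tensor, so `[M E_{ij}, S_{kl}]` and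
`[S_{ij}, M E_{kl}]` each already produce the full `M (g S)` term of the right hand side. The
coefficients `c_s` normalize the Galilean brackets to canonical commutation relations
`[x_{s,a}, y_{r,b}] = -δ_{sr} g_{ab} M`, and for such a system `[S_{ij}, S_{kl}] = -M (g S)`,
which cancels the surplus.
-/

open Finset

section SoRelations

attribute [local instance] LieRing.ofAssociativeRing

variable {ι κ R A : Type*} [CommRing R] [Ring A] [Algebra R A] {M : A}

lemma lie_mul_leibniz (x y z : A) : ⁅x, y * z⁆ = ⁅x, y⁆ * z + y * ⁅x, z⁆ := by
  simp only [Ring.lie_def]; noncomm_ring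

lemma lie_mul_mul (a b c d : A) :
    ⁅a * b, c * d⁆ = a * ⁅b, c⁆ * d + a * c * ⁅b, d⁆ + ⁅a, c⁆ * d * b + c * ⁅a, d⁆ * b := by
  simp only [Ring.lie_def]; noncomm_ring

lemma mul_mul_of_central (hM : ∀ a : A, ⁅M, a⁆ = 0) (x y : A) : x * M * y = M * (x * y) := by
  rw [← (commute_iff_lie_eq.mpr (hM x)).eq, mul_assoc]

lemma lie_mul_left_of_central (hM : ∀ a : A, ⁅M, a⁆ = 0) (x y : A) :
    ⁅M * x, y⁆ = M * ⁅x, y⁆ := by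
  rw [Ring.lie_def, Ring.lie_def, mul_sub, ← mul_assoc y, mul_mul_of_central hM, mul_assoc]

lemma lie_mul_right_of_central (hM : ∀ a : A, ⁅M, a⁆ = 0) (x y : A) :
    ⁅x, M * y⁆ = M * ⁅x, y⁆ := by
  rw [Ring.lie_def, Ring.lie_def, mul_sub, ← mul_assoc x, mul_mul_of_central hM, mul_assoc]

def wedge (u v : ι → A) (i j : ι) : A := u i * v j - u j * v i

lemma wedge_antisymm (u v : ι → A) (a b : ι) : wedge u v a b = -wedge u v b a := by
  simp only [wedge, neg_sub]

lemma lie_wedge_wedge_eq_zero {x y x' y' : ι → A} (hxx : ∀ a b, ⁅x a, x' b⁆ = 0)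
    (hxy : ∀ a b, ⁅x a, y' b⁆ = 0) (hyx : ∀ a b, ⁅y a, x' b⁆ = 0) (hyy : ∀ a b, ⁅y a, y' b⁆ = 0)
    (i j k l : ι) : ⁅wedge x y i j, wedge x' y' k l⁆ = 0 := by
  simp only [wedge, lie_sub, sub_lie, lie_mul_mul, hxx, hxy, hyx, hyy, mul_zero, zero_mul,
    add_zero, sub_self]

variable [DecidableEq ι]

lemma ite_eq_apply_comm {β : Type*} [Zero β] (g : ι → β) (a b : ι) :
    (if a = b then g a else 0) = if b = a then g b else 0 := by
  split_ifs <;> simp_all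

/-- `g_{ik} X_{jl} + g_{jl} X_{ik} - g_{il} X_{jk} - g_{jk} X_{il}`, with `g_{ab} = δ_{ab} g_a`. -/
def soBracket (g : ι → R) (X : ι → ι → A) (i j k l : ι) : A :=
  (if i = k then g i else 0) • X j l + (if j = l then g j else 0) • X i k
    - (if i = l then g i else 0) • X j k - (if j = k then g j else 0) • X i l

lemma soBracket_swap {g : ι → R} {W : ι → ι → A} (hW : ∀ a b, W a b = -W b a)
    (i j k l : ι) : soBracket g W k l i j = -soBracket g W i j k l := by
  simp only [soBracket, ite_eq_apply_comm g k, ite_eq_apply_comm g l, hW l j, hW k i, hW l i,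
    hW k j, smul_neg]
  abel

lemma soBracket_sum (g : ι → R) (W : κ → ι → ι → A) (F : Finset κ) (i j k l : ι) :
    soBracket g (fun a b => ∑ s ∈ F, W s a b) i j k l = ∑ s ∈ F, soBracket g (W s) i j k l := by
  simp only [soBracket, smul_sum, sum_add_distrib, sum_sub_distrib]

def IsSoVector (g : ι → R) (E : ι → ι → A) (u : ι → A) : Prop :=
  ∀ i j k, ⁅E i j, u k⁆ = (if k = i then g i else 0) • u j - (if k = j then g j else 0) • u i

lemma IsSoVector.smul {g : ι → R} {E : ι → ι → A} {u : ι → A} (hu : IsSoVector g E u) (c : R) :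
    IsSoVector g E (c • u) := by
  intro i j k
  simp only [Pi.smul_apply, lie_smul (R := R) (L := A), hu i j k, smul_sub, smul_comm c]

lemma lie_wedge_of_isSoVector {g : ι → R} {E : ι → ι → A} {u v : ι → A}
    (hu : IsSoVector g E u) (hv : IsSoVector g E v) (i j k l : ι) :
    ⁅E i j, wedge u v k l⁆ = soBracket g (wedge u v) i j k l := by
  simp only [wedge, soBracket, lie_sub, lie_mul_leibniz, hu i j, hv i j, sub_mul, mul_sub,
    smul_mul_assoc, mul_smul_comm, @eq_comm _ k, @eq_comm _ l]
  module

lemma lie_sum_wedge_of_isSoVector {g : ι → R} {E : ι → ι → A} {F : Finset κ}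
    {u v : κ → ι → A} (hu : ∀ s ∈ F, IsSoVector g E (u s)) (hv : ∀ s ∈ F, IsSoVector g E (v s))
    (i j k l : ι) :
    ⁅E i j, ∑ s ∈ F, wedge (u s) (v s) k l⁆ =
      soBracket g (fun a b => ∑ s ∈ F, wedge (u s) (v s) a b) i j k l := by
  rw [lie_sum, soBracket_sum]
  exact sum_congr rfl fun s hs => lie_wedge_of_isSoVector (hu s hs) (hv s hs) i j k l

lemma lie_mul_add_eq_mul_soBracket {g : ι → R} {E W : ι → ι → A} (hM : ∀ a : A, ⁅M, a⁆ = 0)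
    (hE : ∀ i j k l, ⁅E i j, E k l⁆ = soBracket g E i j k l)
    (hEW : ∀ i j k l, ⁅E i j, W k l⁆ = soBracket g W i j k l) (hW : ∀ a b, W a b = -W b a)
    (hWW : ∀ i j k l, ⁅W i j, W k l⁆ = -(M * soBracket g W i j k l)) (i j k l : ι) :
    ⁅M * E i j + W i j, M * E k l + W k l⁆ =
      M * soBracket g (fun a b => M * E a b + W a b) i j k l := by
  have hWE : ⁅W i j, E k l⁆ = soBracket g W i j k l := by
    rw [← lie_skew, hEW, soBracket_swap hW, neg_neg]
  simp only [add_lie, lie_add, lie_mul_left_of_central hM, lie_mul_right_of_central hM, hE, hEW,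
    hWE, hWW]
  simp only [soBracket, mul_add, mul_sub, smul_add, mul_smul_comm]
  abel

lemma lie_mul_mul_of_canonical {g : ι → R} {x y : ι → A} (hM : ∀ a : A, ⁅M, a⁆ = 0)
    (hxx : ∀ a b, ⁅x a, x b⁆ = 0) (hyy : ∀ a b, ⁅y a, y b⁆ = 0)
    (hxy : ∀ a b, ⁅x a, y b⁆ = -((if a = b then g a else 0) • M)) (i j k l : ι) :
    ⁅x i * y j, x k * y l⁆ =
      M * ((if j = k then g j else 0) • (x i * y l) -
        (if i = l then g i else 0) • (x k * y j)) := by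
  rw [lie_mul_mul, hxx, hyy, ← lie_skew (y j), hxy, hxy]
  simp only [neg_neg, mul_zero, zero_mul, add_zero, mul_neg, neg_mul, mul_smul_comm,
    smul_mul_assoc, mul_mul_of_central hM, mul_sub, ite_eq_apply_comm g k j]
  abel

lemma lie_wedge_wedge_of_canonical {g : ι → R} {x y : ι → A} (hM : ∀ a : A, ⁅M, a⁆ = 0)
    (hxx : ∀ a b, ⁅x a, x b⁆ = 0) (hyy : ∀ a b, ⁅y a, y b⁆ = 0)
    (hxy : ∀ a b, ⁅x a, y b⁆ = -((if a = b then g a else 0) • M)) (i j k l : ι) :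
    ⁅wedge x y i j, wedge x y k l⁆ = -(M * soBracket g (wedge x y) i j k l) := by
  simp only [wedge, soBracket, lie_sub, sub_lie, lie_mul_mul_of_canonical hM hxx hyy hxy,
    mul_add, mul_sub, mul_smul_comm, smul_sub]
  module

variable [DecidableEq κ]

structure IsCanonicalSystem (g : ι → R) (M : A) (F : Finset κ) (x y : κ → ι → A) : Prop where
  lie_x_x : ∀ s ∈ F, ∀ r ∈ F, ∀ a b, ⁅x s a, x r b⁆ = 0
  lie_y_y : ∀ s ∈ F, ∀ r ∈ F, ∀ a b, ⁅y s a, y r b⁆ = 0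
  lie_x_y : ∀ s ∈ F, ∀ r ∈ F, ∀ a b,
    ⁅x s a, y r b⁆ = if s = r then -((if a = b then g a else 0) • M) else 0

lemma IsCanonicalSystem.lie_sum_wedge {g : ι → R} {F : Finset κ} {x y : κ → ι → A}
    (h : IsCanonicalSystem g M F x y) (hM : ∀ a : A, ⁅M, a⁆ = 0) (i j k l : ι) :
    ⁅∑ s ∈ F, wedge (x s) (y s) i j, ∑ s ∈ F, wedge (x s) (y s) k l⁆ =
      -(M * soBracket g (fun a b => ∑ s ∈ F, wedge (x s) (y s) a b) i j k l) := by
  rw [soBracket_sum, sum_lie, mul_sum, ← sum_neg_distrib]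
  refine sum_congr rfl fun s hs => ?_
  rw [lie_sum, sum_eq_single_of_mem s hs]
  · refine lie_wedge_wedge_of_canonical hM (h.lie_x_x s hs s hs) (h.lie_y_y s hs s hs)
      (fun a b => ?_) i j k l
    rw [h.lie_x_y s hs s hs, if_pos rfl]
  · intro r hr hrs
    refine lie_wedge_wedge_eq_zero (h.lie_x_x s hs r hr) (fun a b => ?_) (fun a b => ?_)
      (h.lie_y_y s hs r hr) i j k l
    · rw [h.lie_x_y s hs r hr, if_neg (Ne.symm hrs)]
    · rw [← lie_skew, h.lie_x_y r hr s hs, if_neg hrs, neg_zero]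

end SoRelations

section Galilei

attribute [local instance] LieRing.ofAssociativeRing

variable {A : Type} [Ring A] [Algebra ℝ A] {d : ℕ} (t : ℕ) {XM : A} {XP : ℕ → Fin d → A}
  {gm : Fin d → ℝ}

noncomputable def etildeCoeff (s : ℕ) : ℝ :=
  (-1 : ℝ) ^ (t + s) / (s.factorial * (2 * t + 1 - s).factorial)

lemma Etilde_eq (XE : Fin d → Fin d → A) (i j : Fin d) :
    Etilde A t XM XE XP i j = XM * XE i j +
      ∑ s ∈ range (t + 1), wedge (etildeCoeff t s • XP s) (XP (2 * t + 1 - s)) i j := by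
  simp only [Etilde, etildeCoeff, wedge, Pi.smul_apply, smul_mul_assoc, smul_sub]

lemma etildeCoeff_mul (s : ℕ) (g : ℝ) :
    etildeCoeff t s * (g * (-1 : ℝ) ^ (s + t + 1) * (2 * t + 1 - s).factorial * s.factorial) =
      -g := by
  have hsign : (-1 : ℝ) ^ (t + s) * (-1) ^ (s + t + 1) = -1 := by
    rw [← pow_add]
    exact Odd.neg_one_pow ⟨t + s, by omega⟩
  rw [etildeCoeff]
  field_simp
  linear_combination g * hsign

variable {t} in
lemma isCanonicalSystem_momenta
    (hPP : ∀ m ≤ 2 * t + 1, ∀ n ≤ 2 * t + 1, ∀ i j,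
      ⁅XP m i, XP n j⁆ =
        (if i = j ∧ m + n = 2 * t + 1 then
          gm i * (-1 : ℝ) ^ (m + t + 1) * (2 * t + 1 - m).factorial * m.factorial
        else 0) • XM) :
    IsCanonicalSystem gm XM (range (t + 1)) (fun s => etildeCoeff t s • XP s)
      (fun s => XP (2 * t + 1 - s)) where
  lie_x_x s hs r hr a b := by
    simp only [mem_range] at hs hr
    rw [Pi.smul_apply, Pi.smul_apply, smul_lie (R := ℝ) (L := A), lie_smul (R := ℝ) (L := A),
      hPP s (by omega) r (by omega), if_neg (by omega), zero_smul, smul_zero, smul_zero]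
  lie_y_y s hs r hr a b := by
    simp only [mem_range] at hs hr
    rw [hPP _ (by omega) _ (by omega), if_neg (by omega), zero_smul]
  lie_x_y s hs r hr a b := by
    simp only [mem_range] at hs hr
    rw [Pi.smul_apply, smul_lie (R := ℝ) (L := A), hPP s (by omega) _ (by omega), smul_smul]
    by_cases hsr : s = r
    · subst hsr
      by_cases hab : a = b
      · rw [if_pos ⟨hab, by omega⟩, if_pos rfl, if_pos hab, etildeCoeff_mul, neg_smul]
      · rw [if_neg (fun h => hab h.1), if_pos rfl, if_neg hab, mul_zero, zero_smul, neg_zero]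
    · rw [if_neg (fun h => hsr (by omega)), if_neg hsr, mul_zero, zero_smul]

end Galilei

theorem stmt9_general (A : Type) [Ring A] [Algebra ℝ A] (d t : ℕ)
    (XM : A) (XE : Fin d → Fin d → A) (XP : ℕ → Fin d → A)
    (gm : Fin d → ℝ)
    (hEE : ∀ i j k l : Fin d,
      ⁅XE i j, XE k l⁆ = (if i = k then gm i else 0) • XE j l
        + (if j = l then gm j else 0) • XE i k
        - (if i = l then gm i else 0) • XE j k
        - (if j = k then gm j else 0) • XE i l)
    (hEP : ∀ (i j : Fin d) (n : ℕ), n ≤ 2 * t + 1 → ∀ k,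
      ⁅XE i j, XP n k⁆ = (if k = i then gm i else 0) • XP n j
        - (if k = j then gm j else 0) • XP n i)
    (hPP : ∀ m ≤ 2 * t + 1, ∀ n ≤ 2 * t + 1, ∀ i j,
      ⁅XP m i, XP n j⁆ =
        (if i = j ∧ m + n = 2 * t + 1 then
          gm i * (-1 : ℝ) ^ (m + t + 1) * (2 * t + 1 - m).factorial * m.factorial
        else 0) • XM)
    (hM : ∀ a : A, ⁅XM, a⁆ = 0) :
    ∀ i j k l : Fin d,
      ⁅Etilde A t XM XE XP i j, Etilde A t XM XE XP k l⁆ =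
        XM * ((if i = k then gm i else 0) • Etilde A t XM XE XP j l
          + (if j = l then gm j else 0) • Etilde A t XM XE XP i k
          - (if i = l then gm i else 0) • Etilde A t XM XE XP j k
          - (if j = k then gm j else 0) • Etilde A t XM XE XP i l) := by
  have hP : ∀ n ≤ 2 * t + 1, IsSoVector gm XE (XP n) := fun n hn i j => hEP i j n hn
  have hEt : Etilde A t XM XE XP = fun a b => XM * XE a b +
      ∑ s ∈ range (t + 1), wedge (etildeCoeff t s • XP s) (XP (2 * t + 1 - s)) a b := by
    funext a b
    exact Etilde_eq t XE a b
  rw [hEt]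
  refine lie_mul_add_eq_mul_soBracket hM hEE ?_ ?_
    ((isCanonicalSystem_momenta hPP).lie_sum_wedge hM)
  · refine lie_sum_wedge_of_isSoVector (fun s hs => (hP s ?_).smul _) (fun s _ => hP _ (by omega))
    rw [mem_range] at hs
    omega
  · intro a b
    rw [← sum_neg_distrib]
    exact sum_congr rfl fun s _ => wedge_antisymm _ _ a b

/-- The elements `Ẽ_{ij}` satisfy
`[Ẽ_{ij}, Ẽ_{kl}] = M (g_{ik} Ẽ_{jl} + g_{jl} Ẽ_{ik} - g_{il} Ẽ_{jk} - g_{jk} Ẽ_{il})`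
in the enveloping algebra of `Gal_ℓ(p,q)`; i.e. they generate a virtual copy of
`so(p,q)`. -/
theorem stmt9 (A : Type) [Ring A] [Algebra ℝ A] (d t p' q' : ℕ) (hd : 3 ≤ d)
    (hpq : p' + q' = d)
    (XM : A) (XE : Fin d → Fin d → A) (XP : ℕ → Fin d → A)
    (gm : Fin d → ℝ) (hgm : ∀ i, gm i = if (i : ℕ) < p' then 1 else -1)
    (hXP0 : ∀ n, 2 * t + 1 < n → ∀ i, XP n i = 0)
    (hEanti : ∀ i j, XE i j = - XE j i)
    (hEE : ∀ i j k l : Fin d,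
      ⁅XE i j, XE k l⁆ = (if i = k then gm i else 0) • XE j l
        + (if j = l then gm j else 0) • XE i k
        - (if i = l then gm i else 0) • XE j k
        - (if j = k then gm j else 0) • XE i l)
    (hEP : ∀ (i j : Fin d) (n : ℕ), n ≤ 2 * t + 1 → ∀ k,
      ⁅XE i j, XP n k⁆ = (if k = i then gm i else 0) • XP n j
        - (if k = j then gm j else 0) • XP n i)
    (hPP : ∀ m ≤ 2 * t + 1, ∀ n ≤ 2 * t + 1, ∀ i j,
      ⁅XP m i, XP n j⁆ =
        (if i = j ∧ m + n = 2 * t + 1 then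
          gm i * (-1 : ℝ) ^ (m + t + 1) * (2 * t + 1 - m).factorial * m.factorial
        else 0) • XM)
    (hM : ∀ a : A, ⁅XM, a⁆ = 0) :
    ∀ i j k l : Fin d,
      ⁅Etilde A t XM XE XP i j, Etilde A t XM XE XP k l⁆ =
        XM * ((if i = k then gm i else 0) • Etilde A t XM XE XP j l
          + (if j = l then gm j else 0) • Etilde A t XM XE XP i k
          - (if i = l then gm i else 0) • Etilde A t XM XE XP j k
          - (if j = k then gm j else 0) • Etilde A t XM XE XP i l) :=
  stmt9_general A d t XM XE XP gm hEE hEP hPP hM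
end

section
/- For ℓ ≥ 3/2 half-integer and d = p+q with 3 ≤ d ≤ 2ℓ+2, the number of functionally independent Casimir invariants of the unextended algebra Ḡal_ℓ(p,q), computed as dim g − max rank of the matrix of structure forms, equals (4ℓd + 3d − d² − 6)/2. -/
/-!
The `P_{n,i}` span an abelian ideal `V` of `g = s ⋉ V`, `s = sl(2,ℝ) ⊕ so(p,q)`, so for every
covector `x` the matrix `x([b_i, b_j])` has a zero `V × V` block and rank at most `2 dim s`.
Equality holds as soon as the stabiliser of `x|_V` in `s` is trivial, and this is the case for
`x` dual to `∑_k P_{k,k}`: the equations `x([P_{n,k}, Y]) = 0` for `(n, k)` among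
`(0,0), (1,0), (0,1), (2,1), (1,2)` force the `sl(2,ℝ)`-part of `Y` and `E_{01}`, `E_{12}` to
vanish (here `t ≠ ±(2t+1)` is used), and then `(n, k) = (i, j)` kills every `E_{ij}` (this
needs `i ≤ 2t + 1`, whence `d ≤ 2t + 3`).
-/
/-- Index type for a basis of the unextended algebra `Ḡal_ℓ(p,q)` (`ℓ = t + 1/2`,
`d = p + q`): `H, D, C`, the `E_{ij}` (`i < j`) and the `P_{n,i}` (`0 ≤ n ≤ 2ℓ`). -/
abbrev GalbIdx (d t : ℕ) : Type :=
  Fin 3 ⊕ ({pr : Fin d × Fin d // pr.1 < pr.2} ⊕ (Fin (2 * t + 2) × Fin d))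

open Matrix Module

section BlockRank

variable {K σ ν : Type*} [Field K] [Fintype σ] [Fintype ν] [DecidableEq σ]

theorem Matrix.rank_fromBlocks_zero₂₂_le (A : Matrix σ σ K) (B : Matrix σ ν K)
    (C : Matrix ν σ K) : (fromBlocks A B C 0).rank ≤ 2 * Fintype.card σ := by
  have hfactor : fromBlocks A B C 0
      = fromBlocks A (1 : Matrix σ σ K) C (0 : Matrix ν σ K)
        * fromBlocks (1 : Matrix σ σ K) (0 : Matrix σ ν K) (0 : Matrix σ σ K) B := by
    rw [fromBlocks_multiply]; simp
  calc (fromBlocks A B C 0).rank ≤ (fromBlocks A 1 C 0).rank := by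
        rw [hfactor]; exact rank_mul_le_left _ _
    _ ≤ Fintype.card (σ ⊕ σ) := rank_le_card_width _
    _ = 2 * Fintype.card σ := by rw [Fintype.card_sum, two_mul]

theorem Matrix.exists_mul_eq_one_of_mulVec_injective [DecidableEq ν] (C : Matrix ν σ K)
    (hC : Function.Injective C.mulVec) : ∃ L : Matrix σ ν K, L * C = 1 := by
  obtain ⟨g, hg⟩ := C.mulVecLin.exists_leftInverse_of_injective
    (LinearMap.ker_eq_bot.mpr hC)
  refine ⟨LinearMap.toMatrix' g, ?_⟩
  rw [← LinearMap.toMatrix'_toLin' C, ← LinearMap.toMatrix'_comp, Matrix.toLin'_apply', hg,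
    LinearMap.toMatrix'_id]

theorem Matrix.rank_fromBlocks_zero₂₂_of_injective (A : Matrix σ σ K) (B : Matrix σ ν K)
    (C : Matrix ν σ K) (hB : Function.Injective B.vecMul) (hC : Function.Injective C.mulVec) :
    (fromBlocks A B C 0).rank = 2 * Fintype.card σ := by
  classical
  obtain ⟨L, hL⟩ := C.exists_mul_eq_one_of_mulVec_injective hC
  obtain ⟨R, hR⟩ := Bᵀ.exists_mul_eq_one_of_mulVec_injective <| by
    rwa [show Bᵀ.mulVec = fun v => v ᵥ* B from funext (mulVec_transpose B)]
  have hR' : B * Rᵀ = 1 := by simpa using congrArg transpose hR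
  have hcore : fromBlocks (1 : Matrix σ σ K) (0 : Matrix σ ν K) 0 L * fromBlocks A B C 0
      * fromBlocks (1 : Matrix σ σ K) (0 : Matrix σ σ K) 0 Rᵀ = fromBlocks A 1 1 0 := by
    rw [fromBlocks_multiply, fromBlocks_multiply]
    simp [hL, hR']
  have hunit : IsUnit (fromBlocks A (1 : Matrix σ σ K) (1 : Matrix σ σ K) 0) := by
    refine IsUnit.of_mul_eq_one (fromBlocks (0 : Matrix σ σ K) 1 1 (-A)) ?_
    simp [fromBlocks_multiply]
  refine le_antisymm (rank_fromBlocks_zero₂₂_le A B C) ?_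
  calc 2 * Fintype.card σ = (fromBlocks A (1 : Matrix σ σ K) (1 : Matrix σ σ K) 0).rank := by
        rw [rank_of_isUnit _ hunit, Fintype.card_sum, two_mul]
    _ ≤ (fromBlocks A B C 0).rank := by
        rw [← hcore]
        exact (rank_mul_le_left _ _).trans (rank_mul_le_right _ _)

end BlockRank

section BracketForm

variable {K ι L : Type*} [Field K] [LieRing L] [LieAlgebra K L] (b : Basis ι K L)

noncomputable def bracketFormMatrix (f : L →ₗ[K] K) : Matrix ι ι K :=
  Matrix.of fun i j => f ⁅b i, b j⁆

theorem bracketFormMatrix_constr [Fintype ι] (x : ι → K) :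
    bracketFormMatrix b (b.constr K x) = Matrix.of fun i j => ∑ k, b.repr ⁅b i, b j⁆ k * x k := by
  ext i j
  simp [bracketFormMatrix, Basis.constr_apply_fintype, mul_comm]

variable {σ ν : Type*} (e : σ ⊕ ν ≃ ι)

theorem bracketFormMatrix_submatrix_eq_fromBlocks
    (hν : ∀ v w, ⁅b (e (.inr v)), b (e (.inr w))⁆ = 0) (f : L →ₗ[K] K) :
    (bracketFormMatrix b f).submatrix e e =
      fromBlocks (Matrix.of fun s s' => f ⁅b (e (.inl s)), b (e (.inl s'))⁆)
        (-(Matrix.of fun v s => f ⁅b (e (.inr v)), b (e (.inl s))⁆)ᵀ)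
        (Matrix.of fun v s => f ⁅b (e (.inr v)), b (e (.inl s))⁆) 0 := by
  ext (s | v) (s' | w)
  · rfl
  · simp only [bracketFormMatrix, submatrix_apply, of_apply, fromBlocks_apply₁₂]
    rw [← lie_skew, map_neg]
    rfl
  · rfl
  · simp [bracketFormMatrix, hν]

theorem rank_bracketFormMatrix_le [Fintype ι] [Fintype σ] [Fintype ν] [DecidableEq σ]
    (hν : ∀ v w, ⁅b (e (.inr v)), b (e (.inr w))⁆ = 0)
    (f : L →ₗ[K] K) : (bracketFormMatrix b f).rank ≤ 2 * Fintype.card σ := by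
  rw [← rank_submatrix _ e e, bracketFormMatrix_submatrix_eq_fromBlocks b e hν]
  exact rank_fromBlocks_zero₂₂_le _ _ _

theorem rank_bracketFormMatrix_eq [Fintype ι] [Fintype σ] [Fintype ν] [DecidableEq σ]
    (hν : ∀ v w, ⁅b (e (.inr v)), b (e (.inr w))⁆ = 0)
    (f : L →ₗ[K] K)
    (hf : ∀ u : σ → K, (∀ v, f ⁅b (e (.inr v)), ∑ s, u s • b (e (.inl s))⁆ = 0) → u = 0) :
    (bracketFormMatrix b f).rank = 2 * Fintype.card σ := by
  set C : Matrix ν σ K := Matrix.of fun v s => f ⁅b (e (.inr v)), b (e (.inl s))⁆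
  have hC : Function.Injective C.mulVec := by
    refine (injective_iff_map_eq_zero C.mulVecLin).mpr fun u hu => hf u fun v => ?_
    simpa [C, mulVec, dotProduct, lie_sum, mul_comm] using congrFun hu v
  rw [← rank_submatrix _ e e, bracketFormMatrix_submatrix_eq_fromBlocks b e hν]
  refine rank_fromBlocks_zero₂₂_of_injective _ _ _ (fun u u' h => hC ?_) hC
  simpa [vecMul_neg, vecMul_transpose] using h

theorem sSup_rank_structureMatrix [Fintype ι] [Fintype σ] [Fintype ν] [DecidableEq σ]
    (hν : ∀ v w, ⁅b (e (.inr v)), b (e (.inr w))⁆ = 0)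
    (x₀ : ι → K) (hx₀ : ∀ u : σ → K,
      (∀ v, b.constr K x₀ ⁅b (e (.inr v)), ∑ s, u s • b (e (.inl s))⁆ = 0) → u = 0) :
    sSup {r : ℕ | ∃ x : ι → K,
      (Matrix.of fun i j => ∑ k, b.repr ⁅b i, b j⁆ k * x k).rank = r} = 2 * Fintype.card σ := by
  refine IsGreatest.csSup_eq ⟨⟨x₀, ?_⟩, ?_⟩
  · rw [← bracketFormMatrix_constr]
    exact rank_bracketFormMatrix_eq b e hν _ hx₀
  · rintro r ⟨x, rfl⟩
    rw [← bracketFormMatrix_constr]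
    exact rank_bracketFormMatrix_le b e hν _

end BracketForm

section FinLtPairs

abbrev FinLtPairs (d : ℕ) : Type := {pr : Fin d × Fin d // pr.1 < pr.2}

theorem two_mul_card_finLtPairs (d : ℕ) : 2 * Fintype.card (FinLtPairs d) = d * (d - 1) := by
  have e : FinLtPairs d ≃ Σ j : Fin d, Fin j :=
    { toFun := fun x => ⟨x.1.2, ⟨x.1.1, x.2⟩⟩
      invFun := fun x => ⟨(⟨x.2, x.2.isLt.trans x.1.isLt⟩, x.1), x.2.isLt⟩
      left_inv := fun _ => rfl
      right_inv := fun _ => rfl }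
  rw [Fintype.card_congr e, Fintype.card_sigma]
  simp only [Fintype.card_fin]
  rw [Fin.sum_univ_eq_sum_range (fun i => i) d, mul_comm]
  exact Finset.sum_range_id_mul_two d

variable {d : ℕ} {R : Type*}

def skewExtend [Neg R] [Zero R] (u : FinLtPairs d → R) (i j : Fin d) : R :=
  if h : i < j then u ⟨(i, j), h⟩ else if h : j < i then -u ⟨(j, i), h⟩ else 0

theorem sum_finLtPairs_ite_eq [AddCommMonoid R] (p : Fin d × Fin d) (f : FinLtPairs d → R) :
    ∑ e : FinLtPairs d, (if e.1 = p then f e else 0) = if h : p.1 < p.2 then f ⟨p, h⟩ else 0 := by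
  split_ifs with h
  · rw [Fintype.sum_eq_single ⟨p, h⟩ fun e he => if_neg fun hep => he (Subtype.ext hep)]
    simp
  · exact Finset.sum_eq_zero fun e _ => if_neg fun hep => h (by simpa [hep] using e.2)

theorem sum_finLtPairs_mul_skew [CommRing R] (u : FinLtPairs d → R) (g : Fin d → R)
    (k n : Fin d) :
    ∑ e : FinLtPairs d, u e * ((if k = e.1.1 then g e.1.1 else 0) * (if e.1.2 = n then 1 else 0)
      - (if k = e.1.2 then g e.1.2 else 0) * (if e.1.1 = n then 1 else 0))
      = g k * skewExtend u k n := by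
  have hsplit : ∀ e : FinLtPairs d, u e * ((if k = e.1.1 then g e.1.1 else 0)
      * (if e.1.2 = n then 1 else 0) - (if k = e.1.2 then g e.1.2 else 0)
      * (if e.1.1 = n then 1 else 0))
      = (if e.1 = (k, n) then g k * u e else 0) - (if e.1 = (n, k) then g k * u e else 0) := by
    rintro ⟨⟨i, j⟩, hij⟩
    have hne : i ≠ j := ne_of_lt hij
    simp only [Prod.mk.injEq]
    split_ifs <;> subst_vars <;> first | ring1 | (exfalso; tauto)
  rw [Finset.sum_congr rfl fun e _ => hsplit e, Finset.sum_sub_distrib,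
    sum_finLtPairs_ite_eq, sum_finLtPairs_ite_eq, skewExtend]
  by_cases hkn : k < n
  · simp [hkn, hkn.not_gt]
  · by_cases hnk : n < k <;> simp [hkn, hnk]

end FinLtPairs

section Galilei

variable {d t : ℕ} {L : Type*} [LieRing L] [LieAlgebra ℝ L]
  {XH XD XC : L} {XE : Fin d → Fin d → L} {XP : ℕ → Fin d → L} {gm : Fin d → ℝ}

theorem apply_lie_XP_eq
    (hH : ∀ n ≤ 2 * t + 1, ∀ i, ⁅XH, XP n i⁆ = (-(n : ℝ)) • XP (n - 1) i)
    (hD : ∀ n ≤ 2 * t + 1, ∀ i, ⁅XD, XP n i⁆ = ((2 * t + 1 : ℝ) - 2 * n) • XP n i)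
    (hC : ∀ n ≤ 2 * t + 1, ∀ i, ⁅XC, XP n i⁆ = ((2 * t + 1 : ℝ) - n) • XP (n + 1) i)
    (hEP : ∀ (i j : Fin d) (n : ℕ), n ≤ 2 * t + 1 → ∀ k,
      ⁅XE i j, XP n k⁆ = (if k = i then gm i else 0) • XP n j
        - (if k = j then gm j else 0) • XP n i)
    (φ : L →ₗ[ℝ] ℝ) (hφ : ∀ n ≤ 2 * t + 1, ∀ k, φ (XP n k) = if (k : ℕ) = n then 1 else 0)
    (a β c : ℝ) (u : FinLtPairs d → ℝ) (n k : Fin d) (hn : (n : ℕ) ≤ 2 * t + 1) :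
    φ ⁅XP n k, a • XH + β • XD + c • XC + ∑ e : FinLtPairs d, u e • XE e.1.1 e.1.2⁆
      = n * (if (k : ℕ) = n - 1 then 1 else 0) * a
        - (2 * t + 1 - 2 * n) * (if k = n then 1 else 0) * β
        - (2 * t + 1 - n) * (if (k : ℕ) = n + 1 then 1 else 0) * c
        - gm k * skewExtend u k n := by
  have hXH : φ ⁅XP n k, XH⁆ = n * if (k : ℕ) = n - 1 then 1 else 0 := by
    rw [← lie_skew, hH _ hn, map_neg, map_smul, hφ _ (by omega), smul_eq_mul, neg_mul, neg_neg]
  have hXD : φ ⁅XP n k, XD⁆ = -((2 * t + 1 - 2 * n) * if k = n then 1 else 0) := by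
    rw [← lie_skew, hD _ hn, map_neg, map_smul, hφ _ hn, smul_eq_mul]
    simp [Fin.val_inj]
  have hXC : φ ⁅XP n k, XC⁆ = -((2 * t + 1 - n) * if (k : ℕ) = n + 1 then 1 else 0) := by
    rw [← lie_skew, hC _ hn, map_neg, map_smul, smul_eq_mul]
    rcases Nat.lt_or_ge (n : ℕ) (2 * t + 1) with hlt | hge
    · rw [hφ _ hlt]
    · -- the coefficient `2t + 1 - n` vanishes, so `XP (2t + 2)` never has to be evaluated
      have : ((n : ℕ) : ℝ) = 2 * t + 1 := by exact_mod_cast le_antisymm hn hge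
      simp [this]
  have hXE : ∀ e : FinLtPairs d, φ ⁅XP n k, XE e.1.1 e.1.2⁆
      = -((if k = e.1.1 then gm e.1.1 else 0) * (if e.1.2 = n then 1 else 0)
        - (if k = e.1.2 then gm e.1.2 else 0) * (if e.1.1 = n then 1 else 0)) := by
    intro e
    rw [← lie_skew, hEP _ _ _ hn, map_neg, map_sub, map_smul, map_smul, hφ _ hn, hφ _ hn]
    simp [Fin.val_inj]
  simp only [lie_add, lie_smul, lie_sum, map_add, map_smul, map_sum, smul_eq_mul, hXH, hXD, hXC,
    hXE, mul_neg, Finset.sum_neg_distrib, sum_finLtPairs_mul_skew]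
  ring

theorem eq_zero_of_stabilizer_equations (ht : 1 ≤ t) (hd : 3 ≤ d)
    (hdu : d ≤ 2 * t + 3) (hgm : ∀ i, gm i = 1 ∨ gm i = -1) (a β c : ℝ)
    (u : FinLtPairs d → ℝ)
    (h : ∀ n k : Fin d, (n : ℕ) ≤ 2 * t + 1 →
      n * (if (k : ℕ) = n - 1 then 1 else 0) * a
        - (2 * t + 1 - 2 * n) * (if k = n then 1 else 0) * β
        - (2 * t + 1 - n) * (if (k : ℕ) = n + 1 then 1 else 0) * c
        - gm k * skewExtend u k n = 0) :
    a = 0 ∧ β = 0 ∧ c = 0 ∧ u = 0 := by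
  have ht' : (1 : ℝ) ≤ t := by exact_mod_cast ht
  obtain ⟨i₀, hi₀⟩ : ∃ i : Fin d, (i : ℕ) = 0 := ⟨⟨0, by omega⟩, rfl⟩
  obtain ⟨i₁, hi₁⟩ : ∃ i : Fin d, (i : ℕ) = 1 := ⟨⟨1, by omega⟩, rfl⟩
  obtain ⟨i₂, hi₂⟩ : ∃ i : Fin d, (i : ℕ) = 2 := ⟨⟨2, by omega⟩, rfl⟩
  have h₀₁ : i₀ < i₁ := by simp [Fin.lt_def, hi₀, hi₁]
  have h₁₂ : i₁ < i₂ := by simp [Fin.lt_def, hi₁, hi₂]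
  have e₀₀ := h i₀ i₀ (by omega)
  have e₁₀ := h i₁ i₀ (by omega)
  have e₀₁ := h i₀ i₁ (by omega)
  have e₂₁ := h i₂ i₁ (by omega)
  have e₁₂ := h i₁ i₂ (by omega)
  simp [hi₀, hi₁, hi₂, skewExtend, h₀₁, h₁₂, h₀₁.not_gt, h₁₂.not_gt, Fin.ext_iff]
    at e₀₀ e₁₀ e₀₁ e₂₁ e₁₂
  set u₀₁ := u ⟨(i₀, i₁), h₀₁⟩
  set u₁₂ := u ⟨(i₁, i₂), h₁₂⟩
  have hβ : β = 0 := e₀₀.resolve_left (by intro h; linarith)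
  have hsq : gm i₁ * gm i₁ = 1 := by rcases hgm i₁ with h | h <;> rw [h] <;> norm_num
  have key : (2 * t - 2 * (2 * t + 1) * (gm i₀ * gm i₂)) * u₀₁ = 0 := by
    linear_combination 2 * t * gm i₁ * e₀₁ - (2 * t + 1) * gm i₁ * e₁₂
      - (2 * t + 1) * gm i₂ * e₂₁ + 2 * (2 * t + 1) * gm i₂ * e₁₀ - 2 * t * u₀₁ * hsq
  have hu₀₁ : u₀₁ = 0 := by
    refine (mul_eq_zero.mp key).resolve_left ?_
    rcases hgm i₀ with h₀ | h₀ <;> rcases hgm i₂ with h₂ | h₂ <;> rw [h₀, h₂] <;>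
      intro h <;> linarith
  have ha : a = 0 := by linear_combination e₁₀ + gm i₀ * hu₀₁
  have hc : c = 0 := by
    have : (2 * t + 1 : ℝ) * c = 0 := by linear_combination -e₀₁ + gm i₁ * hu₀₁
    exact (mul_eq_zero.mp this).resolve_left (by intro h; linarith)
  refine ⟨ha, hβ, hc, funext fun ⟨(i, j), hij⟩ => ?_⟩
  have hj : (j : ℕ) < d := j.isLt
  have hij' : (i : ℕ) < j := hij
  have eᵢⱼ := h i j (by omega)
  simp [ha, hβ, hc, skewExtend, hij, hij.not_gt] at eᵢⱼ
  exact eᵢⱼ.resolve_left (by rcases hgm j with h | h <;> rw [h] <;> norm_num)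

theorem eq_zero_of_forall_apply_lie_XP_eq_zero (ht : 1 ≤ t) (hd : 3 ≤ d)
    (hdu : d ≤ 2 * t + 3) (hgm : ∀ i, gm i = 1 ∨ gm i = -1)
    (hH : ∀ n ≤ 2 * t + 1, ∀ i, ⁅XH, XP n i⁆ = (-(n : ℝ)) • XP (n - 1) i)
    (hD : ∀ n ≤ 2 * t + 1, ∀ i, ⁅XD, XP n i⁆ = ((2 * t + 1 : ℝ) - 2 * n) • XP n i)
    (hC : ∀ n ≤ 2 * t + 1, ∀ i, ⁅XC, XP n i⁆ = ((2 * t + 1 : ℝ) - n) • XP (n + 1) i)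
    (hEP : ∀ (i j : Fin d) (n : ℕ), n ≤ 2 * t + 1 → ∀ k,
      ⁅XE i j, XP n k⁆ = (if k = i then gm i else 0) • XP n j
        - (if k = j then gm j else 0) • XP n i)
    (φ : L →ₗ[ℝ] ℝ) (hφ : ∀ n ≤ 2 * t + 1, ∀ k, φ (XP n k) = if (k : ℕ) = n then 1 else 0)
    (u : Fin 3 ⊕ FinLtPairs d → ℝ)
    (hu : ∀ n k : Fin d, (n : ℕ) ≤ 2 * t + 1 → φ ⁅XP n k, u (.inl 0) • XH + u (.inl 1) • XD
      + u (.inl 2) • XC + ∑ e : FinLtPairs d, u (.inr e) • XE e.1.1 e.1.2⁆ = 0) :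
    u = 0 := by
  obtain ⟨h₀, h₁, h₂, hE⟩ := eq_zero_of_stabilizer_equations ht hd hdu hgm _ _ _ _
    fun n k hn => apply_lie_XP_eq hH hD hC hEP φ hφ _ _ _ _ n k hn ▸ hu n k hn
  funext s
  rcases s with i | e
  · fin_cases i <;> assumption
  · exact congrFun hE e

theorem card_galbIdx_sub_two_mul_card (hd : 1 ≤ d) :
    (Fintype.card (GalbIdx d t) : ℚ) - (2 * Fintype.card (Fin 3 ⊕ FinLtPairs d) : ℕ)
      = (4 * ((t : ℚ) + 1/2) * d + 3 * d - d ^ 2 - 6) / 2 := by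
  have hcard : (2 * Fintype.card (FinLtPairs d) : ℚ) = d * (d - 1) := by
    rw [← Nat.cast_one, ← Nat.cast_sub hd, ← Nat.cast_two, ← Nat.cast_mul,
      ← Nat.cast_mul, two_mul_card_finLtPairs]
  simp only [GalbIdx, Fintype.card_sum, Fintype.card_fin, Fintype.card_prod]
  push_cast
  linear_combination (-1 / 2 : ℚ) * hcard

end Galilei

theorem stmt11_general (d t p : ℕ) (ht : 1 ≤ t) (hd : 3 ≤ d) (hdu : d ≤ 2 * t + 3)
    (L : Type) [LieRing L] [LieAlgebra ℝ L]
    (b : Module.Basis (GalbIdx d t) ℝ L)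
    (XH XD XC : L) (XE : Fin d → Fin d → L) (XP : ℕ → Fin d → L)
    (gm : Fin d → ℝ) (hgm : ∀ i, gm i = if (i : ℕ) < p then 1 else -1)
    (hXH : XH = b (Sum.inl 0)) (hXD : XD = b (Sum.inl 1)) (hXC : XC = b (Sum.inl 2))
    (hXE : ∀ (i j : Fin d) (h : i < j), XE i j = b (Sum.inr (Sum.inl ⟨(i, j), h⟩)))
    (hXP : ∀ (n : Fin (2 * t + 2)) (i : Fin d), XP n i = b (Sum.inr (Sum.inr (n, i))))
    (hH : ∀ n ≤ 2 * t + 1, ∀ i, ⁅XH, XP n i⁆ = (-(n : ℝ)) • XP (n - 1) i)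
    (hD : ∀ n ≤ 2 * t + 1, ∀ i, ⁅XD, XP n i⁆ = ((2 * t + 1 : ℝ) - 2 * n) • XP n i)
    (hC : ∀ n ≤ 2 * t + 1, ∀ i, ⁅XC, XP n i⁆ = ((2 * t + 1 : ℝ) - n) • XP (n + 1) i)
    (hEP : ∀ (i j : Fin d) (n : ℕ), n ≤ 2 * t + 1 → ∀ k,
      ⁅XE i j, XP n k⁆ = (if k = i then gm i else 0) • XP n j
        - (if k = j then gm j else 0) • XP n i)
    (hPP : ∀ m ≤ 2 * t + 1, ∀ n ≤ 2 * t + 1, ∀ i j, ⁅XP m i, XP n j⁆ = 0) :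
    ((Module.finrank ℝ L : ℚ)
        - (sSup {r : ℕ | ∃ x : GalbIdx d t → ℝ,
            (Matrix.of fun i j : GalbIdx d t =>
              ∑ k, b.repr ⁅b i, b j⁆ k * x k).rank = r} : ℕ))
      = (4 * ((t : ℚ) + 1/2) * d + 3 * d - d ^ 2 - 6) / 2 := by
  set eqv := Equiv.sumAssoc (Fin 3) (FinLtPairs d) (Fin (2 * t + 2) × Fin d)
  have hν : ∀ v w, ⁅b (eqv (.inr v)), b (eqv (.inr w))⁆ = 0 := by
    rintro ⟨m, i⟩ ⟨n, j⟩
    rw [Equiv.sumAssoc_apply_inr, Equiv.sumAssoc_apply_inr, ← hXP, ← hXP]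
    exact hPP _ (by omega) _ (by omega) i j
  set x₀ : GalbIdx d t → ℝ := Sum.elim 0 (Sum.elim 0 fun v => if (v.2 : ℕ) = v.1 then 1 else 0)
  have hgm' : ∀ i, gm i = 1 ∨ gm i = -1 := fun i => by rw [hgm i]; split_ifs <;> simp
  have hφ : ∀ n ≤ 2 * t + 1, ∀ k, b.constr ℝ x₀ (XP n k) = if (k : ℕ) = n then 1 else 0 := by
    intro n hn k
    rw [hXP ⟨n, by omega⟩ k, Basis.constr_basis]
    rfl
  have hx₀ : ∀ u : Fin 3 ⊕ FinLtPairs d → ℝ,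
      (∀ v, b.constr ℝ x₀ ⁅b (eqv (.inr v)), ∑ s, u s • b (eqv (.inl s))⁆ = 0) → u = 0 := by
    intro u hu
    refine eq_zero_of_forall_apply_lie_XP_eq_zero ht hd hdu hgm' hH hD hC hEP _ hφ u
      fun n k hn => ?_
    have hY : ∑ s, u s • b (eqv (.inl s)) = u (.inl 0) • XH + u (.inl 1) • XD + u (.inl 2) • XC
        + ∑ e : FinLtPairs d, u (.inr e) • XE e.1.1 e.1.2 := by
      simp only [Fintype.sum_sum_type, Fin.sum_univ_three, eqv, Equiv.sumAssoc_apply_inl_inl,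
        Equiv.sumAssoc_apply_inl_inr, hXH, hXD, hXC]
      congr 1
      exact Finset.sum_congr rfl fun e _ => by rw [hXE _ _ e.2]
    rw [← hY, hXP ⟨n, by omega⟩ k]
    exact hu (⟨n, by omega⟩, k)
  rw [sSup_rank_structureMatrix b eqv hν x₀ hx₀, finrank_eq_card_basis b]
  exact card_galbIdx_sub_two_mul_card (by omega)

/-- For half-integer `ℓ = t + 1/2 ≥ 3/2` and `3 ≤ d = p + q ≤ 2ℓ + 2`,
the number of functionally independent Casimir invariants of `Ḡal_ℓ(p,q)`, computed as
`dim g − max_x rank (C_{ij}^k x_k)` for the matrix of structure forms relative to a basis,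
equals `(4ℓd + 3d − d² − 6)/2`. -/
theorem stmt11 (d t p q : ℕ) (ht : 1 ≤ t) (hd : 3 ≤ d) (hdu : d ≤ 2 * t + 3)
    (hpq : p + q = d)
    (L : Type) [LieRing L] [LieAlgebra ℝ L] [Module.Finite ℝ L]
    (b : Module.Basis (GalbIdx d t) ℝ L)
    (XH XD XC : L) (XE : Fin d → Fin d → L) (XP : ℕ → Fin d → L)
    (gm : Fin d → ℝ) (hgm : ∀ i, gm i = if (i : ℕ) < p then 1 else -1)
    (hXH : XH = b (Sum.inl 0)) (hXD : XD = b (Sum.inl 1)) (hXC : XC = b (Sum.inl 2))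
    (hXE : ∀ (i j : Fin d) (h : i < j), XE i j = b (Sum.inr (Sum.inl ⟨(i, j), h⟩)))
    (hEanti : ∀ i j, XE i j = - XE j i)
    (hXP : ∀ (n : Fin (2 * t + 2)) (i : Fin d), XP n i = b (Sum.inr (Sum.inr (n, i))))
    (hXP0 : ∀ n, 2 * t + 1 < n → ∀ i, XP n i = 0)
    (hDH : ⁅XD, XH⁆ = (2 : ℝ) • XH) (hDC : ⁅XD, XC⁆ = (-2 : ℝ) • XC)
    (hCH : ⁅XC, XH⁆ = XD)
    (hsl2so : ∀ i j : Fin d, ⁅XH, XE i j⁆ = 0 ∧ ⁅XD, XE i j⁆ = 0 ∧ ⁅XC, XE i j⁆ = 0)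
    (hH : ∀ n ≤ 2 * t + 1, ∀ i, ⁅XH, XP n i⁆ = (-(n : ℝ)) • XP (n - 1) i)
    (hD : ∀ n ≤ 2 * t + 1, ∀ i, ⁅XD, XP n i⁆ = ((2 * t + 1 : ℝ) - 2 * n) • XP n i)
    (hC : ∀ n ≤ 2 * t + 1, ∀ i, ⁅XC, XP n i⁆ = ((2 * t + 1 : ℝ) - n) • XP (n + 1) i)
    (hEP : ∀ (i j : Fin d) (n : ℕ), n ≤ 2 * t + 1 → ∀ k,
      ⁅XE i j, XP n k⁆ = (if k = i then gm i else 0) • XP n j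
        - (if k = j then gm j else 0) • XP n i)
    (hEE : ∀ i j k l : Fin d,
      ⁅XE i j, XE k l⁆ = (if i = k then gm i else 0) • XE j l
        + (if j = l then gm j else 0) • XE i k
        - (if i = l then gm i else 0) • XE j k
        - (if j = k then gm j else 0) • XE i l)
    (hPP : ∀ m ≤ 2 * t + 1, ∀ n ≤ 2 * t + 1, ∀ i j, ⁅XP m i, XP n j⁆ = 0) :
    ((Module.finrank ℝ L : ℚ)
        - (sSup {r : ℕ | ∃ x : GalbIdx d t → ℝ,
            (Matrix.of fun i j : GalbIdx d t =>
              ∑ k, b.repr ⁅b i, b j⁆ k * x k).rank = r} : ℕ))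
      = (4 * ((t : ℚ) + 1/2) * d + 3 * d - d ^ 2 - 6) / 2 :=
  stmt11_general d t p ht hd hdu L b XH XD XC XE XP gm hgm hXH hXD hXC hXE hXP hH hD hC hEP hPP
end

section
/- For ℓ ∈ ℤ + 1/2 and d = p + q, the tensor product Γ = D_ℓ ⊗ ρ₁ of the irreducible (2ℓ+1)-dimensional representation D_ℓ of sl(2,ℝ) with the defining d-dimensional representation ρ₁ of so(p,q) admits a nondegenerate invariant skew-symmetric bilinear form; concretely, the bilinear form on ℝ^{(2ℓ+1)d} defined by ⟨P_{m,i}, P_{n,j}⟩ = g_{ij} δ_{m+n,2ℓ} (−1)^{m+ℓ+1/2} (2ℓ−m)! m! is skew-symmetric, nondegenerate, and invariant under the action of sl(2,ℝ) ⊕ so(p,q) given by the brackets [H,P_{n,i}] = −nP_{n−1,i}, [D,P_{n,i}] = 2(ℓ−n)P_{n,i}, [C,P_{n,i}] = (2ℓ−n)P_{n+1,i}, [E_{ij},P_{n,k}] = g_{ik}P_{n,j} − g_{jk}P_{n,i}. -/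
open Matrix

open Kronecker

namespace Stmt19Aux

noncomputable def c (t m : ℕ) : ℝ :=
  (-1 : ℝ) ^ (m + t + 1) * (2 * t + 1 - m).factorial * m.factorial

lemma c_ne_zero (t m : ℕ) : c t m ≠ 0 :=
  mul_ne_zero (mul_ne_zero (pow_ne_zero _ (by norm_num))
    (Nat.cast_ne_zero.mpr (Nat.factorial_ne_zero _)))
    (Nat.cast_ne_zero.mpr (Nat.factorial_ne_zero _))

noncomputable def T (t : ℕ) : Matrix (Fin (2*t+2)) (Fin (2*t+2)) ℝ :=
  .of fun m n => if m = n.rev then c t m else 0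

lemma T_apply (t : ℕ) (m n : Fin (2*t+2)) :
    T t m n = if m = n.rev then c t m else 0 := rfl

lemma T_apply' (t : ℕ) (m n : Fin (2*t+2)) :
    T t m n = if n = m.rev then c t m else 0 := by
  rw [T_apply]
  have : m = n.rev ↔ n = m.rev := by
    rw [Fin.ext_iff, Fin.ext_iff, Fin.val_rev, Fin.val_rev]; omega
  simp only [this]

noncomputable def Tinv (t : ℕ) : Matrix (Fin (2*t+2)) (Fin (2*t+2)) ℝ :=
  .of fun m n => if m = n.rev then (c t ((n : Fin (2*t+2)) : ℕ))⁻¹ else 0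

lemma T_mul_Tinv (t : ℕ) : T t * Tinv t = 1 := by
  ext m n
  have h : ∀ k : Fin (2*t+2), T t m k * Tinv t k n
      = if k = m.rev then c t m * Tinv t k n else 0 := by
    intro k
    rw [T_apply']
    split_ifs with h <;> simp [h, mul_comm]
  rw [Matrix.mul_apply, Finset.sum_congr rfl (fun k _ => h k),
    Finset.sum_ite_eq' _ (m.rev)]
  simp only [Finset.mem_univ, if_true, Tinv, Matrix.of_apply]
  by_cases hmn : m = n
  · subst hmn
    rw [if_pos rfl, mul_inv_cancel₀ (c_ne_zero t m), Matrix.one_apply_eq]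
  · rw [if_neg (fun h => hmn (by simpa using congrArg Fin.rev h)),
      Matrix.one_apply_ne hmn, mul_zero]

-- generic collapse helper
lemma collapse {N : ℕ} (A B : Matrix (Fin N) (Fin N) ℝ) (cc : ℕ → ℝ)
    (hB : ∀ m n, B m n = if m = n.rev then cc m else 0) (m n : Fin N) :
    (Aᵀ * B) m n = A n.rev m * cc n.rev ∧
    (B * A) m n = cc m * A m.rev n := by
  constructor
  · have h : ∀ k : Fin N, Aᵀ m k * B k n
        = if k = n.rev then A k m * cc k else 0 := by
      intro k
      rw [transpose_apply, hB]
      split_ifs with h <;> simp [h]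
    rw [Matrix.mul_apply, Finset.sum_congr rfl (fun k _ => h k),
      Finset.sum_ite_eq' _ (n.rev)]
    simp
  · have hB' : ∀ m n : Fin N, B m n = if n = m.rev then cc m else 0 := by
      intro m n
      rw [hB]
      have : m = n.rev ↔ n = m.rev := by
        rcases N with _ | N
        · exact m.elim0
        rw [Fin.ext_iff, Fin.ext_iff, Fin.val_rev, Fin.val_rev]; omega
      simp only [this]
    have h : ∀ k : Fin N, B m k * A k n
        = if k = m.rev then cc m * A k n else 0 := by
      intro k
      rw [hB']
      split_ifs with h <;> simp [h, mul_comm]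
    rw [Matrix.mul_apply, Finset.sum_congr rfl (fun k _ => h k),
      Finset.sum_ite_eq' _ (m.rev)]
    simp

noncomputable def BH (t : ℕ) : Matrix (Fin (2*t+2)) (Fin (2*t+2)) ℝ :=
  .of fun m n => if (m : ℕ) + 1 = (n : ℕ) then -((n : ℕ) : ℝ) else 0

noncomputable def BD (t : ℕ) : Matrix (Fin (2*t+2)) (Fin (2*t+2)) ℝ :=
  .of fun m n => if m = n then 2 * (t : ℝ) + 1 - 2 * ((n : ℕ) : ℝ) else 0

noncomputable def BC (t : ℕ) : Matrix (Fin (2*t+2)) (Fin (2*t+2)) ℝ :=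
  .of fun m n => if (m : ℕ) = (n : ℕ) + 1 then 2 * (t : ℝ) + 1 - ((n : ℕ) : ℝ) else 0

lemma BH_identity (t : ℕ) : (BH t)ᵀ * T t + T t * BH t = 0 := by
  ext m n
  obtain ⟨e1, -⟩ := collapse (BH t) (T t) (c t) (T_apply t) m n
  obtain ⟨-, e2⟩ := collapse (BH t) (T t) (c t) (T_apply t) m n
  rw [Matrix.add_apply, e1, e2, Matrix.zero_apply]
  simp only [BH, Matrix.of_apply, Fin.val_rev]
  have hm := m.isLt
  have hn := n.isLt
  by_cases hc : (m:ℕ) + (n:ℕ) = 2*t+2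
  · rw [if_pos (by omega : 2*t+2-((n:ℕ)+1)+1 = (m:ℕ)),
      if_pos (by omega : 2*t+2-((m:ℕ)+1)+1 = (n:ℕ))]
    obtain ⟨a, ha, hle⟩ : ∃ a, (m:ℕ) = a+1 ∧ a ≤ 2*t := ⟨(m:ℕ)-1, by omega, by omega⟩
    rw [ha, show 2*t+2-((n:ℕ)+1) = a by omega, show (n:ℕ) = (2*t-a)+1 by omega]
    simp only [c]
    rw [show 2*t+1-a = (2*t-a)+1 by omega, show 2*t+1-(a+1) = 2*t-a by omega,
      Nat.factorial_succ (2*t-a), Nat.factorial_succ a]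
    push_cast
    ring
  · rw [if_neg (by omega), if_neg (by omega)]
    ring

lemma BD_identity (t : ℕ) : (BD t)ᵀ * T t + T t * BD t = 0 := by
  ext m n
  obtain ⟨e1, -⟩ := collapse (BD t) (T t) (c t) (T_apply t) m n
  obtain ⟨-, e2⟩ := collapse (BD t) (T t) (c t) (T_apply t) m n
  rw [Matrix.add_apply, e1, e2, Matrix.zero_apply]
  simp only [BD, Matrix.of_apply, Fin.val_rev]
  have hm := m.isLt
  have hn := n.isLt
  by_cases hc : (m:ℕ) + (n:ℕ) = 2*t+1
  · rw [if_pos (by rw [Fin.ext_iff, Fin.val_rev]; omega : Fin.rev n = m),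
      if_pos (by rw [Fin.ext_iff, Fin.val_rev]; omega : Fin.rev m = n),
      show 2*t+2-((n:ℕ)+1) = (m:ℕ) by omega]
    have hr : ((m:ℕ):ℝ) + ((n:ℕ):ℝ) = 2*(t:ℝ)+1 := by exact_mod_cast hc
    linear_combination (-2 * c t (m:ℕ)) * hr
  · rw [if_neg (fun h => hc (by rw [Fin.ext_iff, Fin.val_rev] at h; omega)),
      if_neg (fun h => hc (by rw [Fin.ext_iff, Fin.val_rev] at h; omega))]
    ring

lemma BC_identity (t : ℕ) : (BC t)ᵀ * T t + T t * BC t = 0 := by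
  ext m n
  obtain ⟨e1, -⟩ := collapse (BC t) (T t) (c t) (T_apply t) m n
  obtain ⟨-, e2⟩ := collapse (BC t) (T t) (c t) (T_apply t) m n
  rw [Matrix.add_apply, e1, e2, Matrix.zero_apply]
  simp only [BC, Matrix.of_apply, Fin.val_rev]
  have hm := m.isLt
  have hn := n.isLt
  by_cases hc : (m:ℕ) + (n:ℕ) = 2*t
  · rw [if_pos (by omega : 2*t+2-((n:ℕ)+1) = (m:ℕ)+1),
      if_pos (by omega : 2*t+2-((m:ℕ)+1) = (n:ℕ)+1),
      show 2*t+2-((n:ℕ)+1) = (m:ℕ)+1 by omega]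
    have hr : ((n:ℕ):ℝ) = 2*(t:ℝ) - ((m:ℕ):ℝ) := by
      have : ((m:ℕ):ℝ) + ((n:ℕ):ℝ) = 2*(t:ℝ) := by exact_mod_cast hc
      linarith
    rw [hr]
    simp only [c]
    rw [show 2*t+1-((m:ℕ)+1) = 2*t-(m:ℕ) by omega,
      show 2*t+1-(m:ℕ) = (2*t-(m:ℕ))+1 by omega,
      Nat.factorial_succ (2*t-(m:ℕ)), Nat.factorial_succ (m:ℕ)]
    have hcast : ((2*t-(m:ℕ) : ℕ):ℝ) = 2*(t:ℝ) - ((m:ℕ):ℝ) := by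
      rw [Nat.cast_sub (by omega)]; push_cast; ring
    push_cast [hcast]
    ring
  · rw [if_neg (by omega), if_neg (by omega)]
    ring

end Stmt19Aux

namespace Stmt19Aux

lemma c_rev (t a b : ℕ) (h : a + b = 2*t+1) : c t b = - c t a := by
  unfold c
  rw [show 2*t+1-b = a by omega, show 2*t+1-a = b by omega]
  rcases Nat.even_or_odd (a+t+1) with hp | hp
  · have hq : Odd (b+t+1) := by
      rw [Nat.odd_iff]; rw [Nat.even_iff] at hp; omega
    rw [hp.neg_one_pow, hq.neg_one_pow]
    push_cast
    ring
  · have hq : Even (b+t+1) := by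
      rw [Nat.even_iff]; rw [Nat.odd_iff] at hp; omega
    rw [hp.neg_one_pow, hq.neg_one_pow]
    push_cast
    ring

noncomputable def S (d : ℕ) (gm : Fin d → ℝ) (i0 j0 : Fin d) : Matrix (Fin d) (Fin d) ℝ :=
  .of fun l k =>
    (if k = i0 then gm i0 else 0) * (if l = j0 then 1 else 0)
      - (if k = j0 then gm j0 else 0) * (if l = i0 then 1 else 0)

lemma S_identity (d : ℕ) (gm : Fin d → ℝ) (i0 j0 : Fin d) :
    (S d gm i0 j0)ᵀ * Matrix.diagonal gm + Matrix.diagonal gm * S d gm i0 j0 = 0 := by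
  ext i j
  rw [Matrix.add_apply, Matrix.mul_diagonal, Matrix.diagonal_mul,
    Matrix.transpose_apply, Matrix.zero_apply]
  simp only [S, Matrix.of_apply]
  split_ifs <;> subst_vars <;> ring

end Stmt19Aux

open Stmt19Aux

/-- For `ℓ = t + 1/2` and `d = p + q`, the bilinear form on
`ℝ^{(2ℓ+1)d}` given by `⟨P_{m,i}, P_{n,j}⟩ = g_{ij} δ_{m+n,2ℓ} (−1)^{m+ℓ+1/2} (2ℓ−m)! m!`
is skew-symmetric and nondegenerate, and it is invariant under the action of
`sl(2,ℝ) ⊕ so(p,q)` on `Γ = D_ℓ ⊗ ρ₁` given by `[H,P_{n,i}] = −nP_{n−1,i}`,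
`[D,P_{n,i}] = 2(ℓ−n)P_{n,i}`, `[C,P_{n,i}] = (2ℓ−n)P_{n+1,i}`,
`[E_{ij},P_{n,k}] = g_{ik}P_{n,j} − g_{jk}P_{n,i}`; invariance of the form under an
operator with matrix `ρ` means `ρᵀ J + J ρ = 0`. -/
theorem stmt19 (d t p q : ℕ) (hd : 3 ≤ d) (hpq : p + q = d)
    (gm : Fin d → ℝ) (hgm : ∀ i, gm i = if (i : ℕ) < p then 1 else -1)
    (J ρH ρD ρC : Matrix (Fin (2 * t + 2) × Fin d) (Fin (2 * t + 2) × Fin d) ℝ)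
    (ρE : Fin d → Fin d → Matrix (Fin (2 * t + 2) × Fin d) (Fin (2 * t + 2) × Fin d) ℝ)
    (hJ : ∀ (m n : Fin (2 * t + 2)) (i j : Fin d),
      J (m, i) (n, j) =
        if i = j ∧ (m : ℕ) + (n : ℕ) = 2 * t + 1 then
          gm i * (-1 : ℝ) ^ ((m : ℕ) + t + 1) * (2 * t + 1 - (m : ℕ)).factorial
            * (m : ℕ).factorial
        else 0)
    (hρH : ∀ (m n : Fin (2 * t + 2)) (j i : Fin d),
      ρH (m, j) (n, i) =
        if j = i ∧ (m : ℕ) + 1 = (n : ℕ) then -((n : ℕ) : ℝ) else 0)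
    (hρD : ∀ (m n : Fin (2 * t + 2)) (j i : Fin d),
      ρD (m, j) (n, i) =
        if j = i ∧ m = n then 2 * (t : ℝ) + 1 - 2 * ((n : ℕ) : ℝ) else 0)
    (hρC : ∀ (m n : Fin (2 * t + 2)) (j i : Fin d),
      ρC (m, j) (n, i) =
        if j = i ∧ (m : ℕ) = (n : ℕ) + 1 then 2 * (t : ℝ) + 1 - ((n : ℕ) : ℝ) else 0)
    (hρE : ∀ (i0 j0 : Fin d) (m n : Fin (2 * t + 2)) (l k : Fin d),
      ρE i0 j0 (m, l) (n, k) =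
        if m = n then
          (if k = i0 then gm i0 else 0) * (if l = j0 then 1 else 0)
            - (if k = j0 then gm j0 else 0) * (if l = i0 then 1 else 0)
        else 0) :
    Jᵀ = -J ∧ IsUnit J.det ∧
    ρHᵀ * J + J * ρH = 0 ∧ ρDᵀ * J + J * ρD = 0 ∧ ρCᵀ * J + J * ρC = 0 ∧
    (∀ i0 j0 : Fin d, (ρE i0 j0)ᵀ * J + J * ρE i0 j0 = 0) := by
  set G : Matrix (Fin d) (Fin d) ℝ := Matrix.diagonal gm with hG
  -- Kronecker decompositions
  have hJk : J = T t ⊗ₖ G := by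
    ext ⟨m, i⟩ ⟨n, j⟩
    have hm := m.isLt
    have hn := n.isLt
    rw [hJ, kroneckerMap_apply, T_apply, hG, Matrix.diagonal_apply]
    dsimp only
    by_cases h1 : i = j <;> by_cases h2 : (m : ℕ) + (n : ℕ) = 2 * t + 1
    · rw [if_pos ⟨h1, h2⟩, if_pos (by rw [Fin.ext_iff, Fin.val_rev]; omega : m = n.rev),
        if_pos h1, c]
      ring
    · rw [if_neg (by tauto), if_neg (by rw [Fin.ext_iff, Fin.val_rev]; omega), zero_mul]
    · rw [if_neg (by tauto), if_neg h1, mul_zero]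
    · rw [if_neg (by tauto), if_neg h1, mul_zero]
  have hρHk : ρH = BH t ⊗ₖ (1 : Matrix (Fin d) (Fin d) ℝ) := by
    ext ⟨m, i⟩ ⟨n, j⟩
    rw [hρH, kroneckerMap_apply]
    simp only [BH, Matrix.of_apply, Matrix.one_apply]
    by_cases h1 : i = j <;> by_cases h2 : (m : ℕ) + 1 = (n : ℕ) <;>
      simp [h1, h2]
  have hρDk : ρD = BD t ⊗ₖ (1 : Matrix (Fin d) (Fin d) ℝ) := by
    ext ⟨m, i⟩ ⟨n, j⟩
    rw [hρD, kroneckerMap_apply]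
    simp only [BD, Matrix.of_apply, Matrix.one_apply]
    by_cases h1 : i = j <;> by_cases h2 : m = n <;> simp [h1, h2]
  have hρCk : ρC = BC t ⊗ₖ (1 : Matrix (Fin d) (Fin d) ℝ) := by
    ext ⟨m, i⟩ ⟨n, j⟩
    rw [hρC, kroneckerMap_apply]
    simp only [BC, Matrix.of_apply, Matrix.one_apply]
    by_cases h1 : i = j <;> by_cases h2 : (m : ℕ) = (n : ℕ) + 1 <;> simp [h1, h2]
  have hρEk : ∀ i0 j0, ρE i0 j0 = (1 : Matrix (Fin (2*t+2)) (Fin (2*t+2)) ℝ) ⊗ₖ S d gm i0 j0 := by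
    intro i0 j0
    ext ⟨m, i⟩ ⟨n, j⟩
    rw [hρE, kroneckerMap_apply]
    simp only [S, Matrix.of_apply, Matrix.one_apply]
    by_cases h2 : m = n <;> simp [h2]
  have hGG : G * G = 1 := by
    rw [hG, Matrix.diagonal_mul_diagonal]
    have h1 : (fun i => gm i * gm i) = fun _ => (1 : ℝ) :=
      funext fun i => by rw [hgm]; split_ifs <;> norm_num
    rw [h1, Matrix.diagonal_one]
  refine ⟨?_, ?_, ?_, ?_, ?_, ?_⟩
  · -- skew
    ext ⟨m, i⟩ ⟨n, j⟩
    rw [Matrix.transpose_apply, Matrix.neg_apply, hJ, hJ]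
    by_cases h1 : i = j <;> by_cases h2 : (m : ℕ) + (n : ℕ) = 2 * t + 1
    · rw [if_pos ⟨h1.symm, by omega⟩, if_pos ⟨h1, h2⟩]
      subst h1
      have hcr := c_rev t (m : ℕ) (n : ℕ) h2
      unfold c at hcr
      linear_combination gm i * hcr
    · rw [if_neg (by rintro ⟨-, h⟩; omega), if_neg (by tauto), neg_zero]
    · rw [if_neg (by rintro ⟨h, -⟩; exact h1 h.symm), if_neg (by tauto), neg_zero]
    · rw [if_neg (by tauto), if_neg (by tauto), neg_zero]
  · -- nondegenerate
    apply Matrix.isUnit_det_of_right_inverse (B := Tinv t ⊗ₖ G)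
    rw [hJk, ← Matrix.mul_kronecker_mul, T_mul_Tinv, hGG, Matrix.one_kronecker_one]
  · rw [hρHk, hJk, ← Matrix.kroneckerMap_transpose, ← Matrix.mul_kronecker_mul,
      ← Matrix.mul_kronecker_mul, Matrix.transpose_one, one_mul, mul_one,
      ← Matrix.add_kronecker, BH_identity, Matrix.zero_kronecker]
  · rw [hρDk, hJk, ← Matrix.kroneckerMap_transpose, ← Matrix.mul_kronecker_mul,
      ← Matrix.mul_kronecker_mul, Matrix.transpose_one, one_mul, mul_one,
      ← Matrix.add_kronecker, BD_identity, Matrix.zero_kronecker]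
  · rw [hρCk, hJk, ← Matrix.kroneckerMap_transpose, ← Matrix.mul_kronecker_mul,
      ← Matrix.mul_kronecker_mul, Matrix.transpose_one, one_mul, mul_one,
      ← Matrix.add_kronecker, BC_identity, Matrix.zero_kronecker]
  · intro i0 j0
    rw [hρEk, hJk, ← Matrix.kroneckerMap_transpose, ← Matrix.mul_kronecker_mul,
      ← Matrix.mul_kronecker_mul, Matrix.transpose_one, one_mul, mul_one,
      ← Matrix.kronecker_add, S_identity, Matrix.kronecker_zero]
end
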